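/- arXiv:2109.04387 — 8 statements merged into one kernel-verified Lean document; each statement's English description precedes it below -/
import Mathlib

section
/- In a dihedral Artin group A_{ab} with m ≥ 3, if two distinct conjugates of standard generators commute, they are equal. Equivalently, two distinct conjugates of standard generators never generate a subgroup isomorphic to ℤ². -/
/-- The alternating word `a * b * a * ⋯` with `n` letters. -/
def altWord {G : Type*} [Monoid G] (a b : G) : ℕ → G
  | 0 => 1
  | n + 1 => a * altWord b a n

/-- The defining relation of the dihedral Artin group with label `m`:
`aba⋯ = bab⋯` (m letters on each side). -/
def dihedralRels (m : ℕ) : Set (FreeGroup (Fin 2)) :=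
  { altWord (FreeGroup.of 0) (FreeGroup.of 1) m *
      (altWord (FreeGroup.of 1) (FreeGroup.of 0) m)⁻¹ }

set_option linter.unusedSectionVars false

open Monoid Monoid.CoprodI

namespace DihedralAux

variable {ι : Type*} [DecidableEq ι] {M : ι → Type*} [∀ i, Group (M i)]
  [∀ i, DecidableEq (M i)]

noncomputable def wlen (g : CoprodI M) : ℕ := (Word.equiv (M := M) g).toList.length

lemma equiv_symm_eq (w : Word M) : (Word.equiv (M := M)).symm w = w.prod := rfl

lemma equiv_prod (w : Word M) : Word.equiv (M := M) w.prod = w := by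
  rw [← equiv_symm_eq, Equiv.apply_symm_apply]

lemma prod_equiv (g : CoprodI M) : (Word.equiv (M := M) g).prod = g := by
  rw [← equiv_symm_eq, Equiv.symm_apply_apply]

lemma prod_injective : Function.Injective (Word.prod : Word M → CoprodI M) := by
  intro w₁ w₂ h
  rw [← equiv_prod (M := M) w₁, h, equiv_prod]

lemma wlen_prod (w : Word M) : wlen w.prod = w.toList.length := by
  rw [wlen, equiv_prod]

def listProd (l : List (Σ i, M i)) : CoprodI M := (l.map fun x => of x.snd).prod

@[simp] lemma listProd_nil : listProd (M := M) [] = 1 := rfl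

@[simp] lemma listProd_cons (x : Σ i, M i) (l : List (Σ i, M i)) :
    listProd (x :: l) = of x.snd * listProd l := by
  simp [listProd]

lemma listProd_append (l₁ l₂ : List (Σ i, M i)) :
    listProd (l₁ ++ l₂) = listProd l₁ * listProd l₂ := by
  simp [listProd]

lemma word_prod_eq (w : Word M) : w.prod = listProd w.toList := rfl

/-! ### word constructors -/

/-- single letter word -/
def sing (i : ι) (m : M i) (hm : m ≠ 1) : Word M where
  toList := [⟨i, m⟩]
  ne_one := by rintro l hl; simp only [List.mem_singleton] at hl; subst hl; exact hm
  chain_ne := List.isChain_singleton _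

@[simp] lemma sing_toList (i : ι) (m : M i) (hm : m ≠ 1) :
    (sing i m hm).toList = [⟨i, m⟩] := rfl

@[simp] lemma sing_prod (i : ι) (m : M i) (hm : m ≠ 1) : (sing i m hm).prod = of m := by
  simp [word_prod_eq]

/-- append two words when the junction indices differ -/
def wappend (w₁ w₂ : Word M)
    (h : ∀ x ∈ w₁.toList.getLast?, ∀ y ∈ w₂.toList.head?, Sigma.fst x ≠ Sigma.fst y) :
    Word M where
  toList := w₁.toList ++ w₂.toList
  ne_one := by
    intro l hl
    rcases List.mem_append.mp hl with h' | h'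
    · exact w₁.ne_one l h'
    · exact w₂.ne_one l h'
  chain_ne := List.isChain_append.mpr ⟨w₁.chain_ne, w₂.chain_ne, h⟩

@[simp] lemma wappend_toList (w₁ w₂ : Word M) (h) :
    (wappend w₁ w₂ h).toList = w₁.toList ++ w₂.toList := rfl

@[simp] lemma wappend_prod (w₁ w₂ : Word M) (h) :
    (wappend w₁ w₂ h).prod = w₁.prod * w₂.prod := by
  simp [word_prod_eq, listProd_append]

/-- tail of a word -/
def wtail (w : Word M) : Word M where
  toList := w.toList.tail
  ne_one := fun l hl => w.ne_one l (List.mem_of_mem_tail hl)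
  chain_ne := w.chain_ne.tail

/-- word without its last letter -/
def winit (w : Word M) : Word M where
  toList := w.toList.dropLast
  ne_one := fun l hl => w.ne_one l ((List.dropLast_sublist w.toList).subset hl)
  chain_ne := w.chain_ne.prefix (List.dropLast_prefix _)

/-- inverse word -/
def winv (w : Word M) : Word M where
  toList := (w.toList.map fun x => (⟨x.1, x.2⁻¹⟩ : Σ i, M i)).reverse
  ne_one := by
    intro l hl
    rw [List.mem_reverse, List.mem_map] at hl
    obtain ⟨x, hx, rfl⟩ := hl
    simpa using w.ne_one x hx
  chain_ne := by
    rw [List.isChain_reverse, List.isChain_map]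
    exact List.IsChain.imp (fun a b h => by exact fun h' => h h'.symm) w.chain_ne

lemma listProd_inv_reverse (l : List (Σ i, M i)) :
    listProd ((l.map fun x => (⟨x.1, x.2⁻¹⟩ : Σ i, M i)).reverse) = (listProd l)⁻¹ := by
  induction l with
  | nil => simp
  | cons x t ih => simp [listProd_append, ih, mul_inv_rev]

@[simp] lemma winv_prod (w : Word M) : (winv w).prod = w.prod⁻¹ := by
  rw [word_prod_eq, word_prod_eq]
  exact listProd_inv_reverse w.toList

@[simp] lemma winv_toList_length (w : Word M) :
    (winv w).toList.length = w.toList.length := by simp [winv]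

lemma prod_eq_head_mul_tail (w : Word M) (hn : w.toList ≠ []) :
    w.prod = of (w.toList.head hn).snd * (wtail w).prod := by
  rw [word_prod_eq, word_prod_eq]
  conv_lhs => rw [← List.cons_head_tail hn]
  rw [listProd_cons]; rfl

lemma prod_eq_init_mul_last (w : Word M) (hn : w.toList ≠ []) :
    w.prod = (winit w).prod * of (w.toList.getLast hn).snd := by
  rw [word_prod_eq, word_prod_eq]
  conv_lhs => rw [← List.dropLast_append_getLast hn]
  rw [listProd_append]
  simp [winit]

/-! ### length subadditivity -/

lemma length_equivPair_tail (i : ι) (w : Word M) :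
    (Word.equivPair i w).tail.toList.length ≤ w.toList.length := by
  induction w using Word.consRecOn with
  | empty =>
      rw [Word.equivPair_eq_of_fstIdx_ne (by simp [Word.fstIdx, Word.empty])]
  | cons j m w' h1 h2 ih =>
      by_cases hij : i = j
      · subst hij
        have htl : (Word.equivPair i (Word.cons m w' h1 h2)).tail =
            (Word.equivPair i w').tail := by
          rw [Word.cons_eq_smul, Word.equivPair_smul_same]
        rw [htl, Word.cons_toList, List.length_cons]
        exact le_trans ih (Nat.le_succ _)
      · rw [Word.equivPair_eq_of_fstIdx_ne (by simp [Word.fstIdx_cons, Ne.symm hij])]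

lemma length_rcons_le {i : ι} (p : Word.Pair M i) :
    (Word.rcons p).toList.length ≤ p.tail.toList.length + 1 := by
  rw [Word.rcons]
  split_ifs
  · exact Nat.le_succ _
  · simp [Word.cons]

lemma length_of_smul_le (i : ι) (m : M i) (w : Word M) :
    (of m • w).toList.length ≤ w.toList.length + 1 := by
  rw [Word.of_smul_def]
  exact le_trans (length_rcons_le _) (by simpa using Nat.add_le_add_right (length_equivPair_tail i w) 1)

lemma length_prod_smul_le (w w' : Word M) :
    (w.prod • w').toList.length ≤ w.toList.length + w'.toList.length := by
  induction w using Word.consRecOn with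
  | empty => simp [Word.prod_empty]
  | cons j m w₀ h1 h2 ih =>
      rw [Word.prod_cons, mul_smul]
      calc (of m • w₀.prod • w').toList.length ≤ (w₀.prod • w').toList.length + 1 :=
            length_of_smul_le _ _ _
        _ ≤ w₀.toList.length + w'.toList.length + 1 := by omega
        _ = (Word.cons m w₀ h1 h2).toList.length + w'.toList.length := by
            simp [Word.cons]; omega

lemma equiv_eq_smul_empty (g : CoprodI M) : Word.equiv (M := M) g = g • Word.empty := rfl

lemma wlen_mul_le (g h : CoprodI M) : wlen (g * h) ≤ wlen g + wlen h := by
  have h1 : Word.equiv (M := M) (g * h) = g • Word.equiv (M := M) h := by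
    rw [equiv_eq_smul_empty, equiv_eq_smul_empty, mul_smul]
  rw [wlen, wlen, wlen, h1]
  conv_lhs => rw [← prod_equiv g]
  exact length_prod_smul_le _ _

lemma wlen_of_le (i : ι) (m : M i) : wlen (of m : CoprodI M) ≤ 1 := by
  by_cases hm : m = 1
  · subst hm
    have : (of (1 : M i) : CoprodI M) = (Word.empty : Word M).prod := by simp [Word.prod_empty]
    rw [this, wlen_prod]; simp [Word.empty]
  · have : (of m : CoprodI M) = (sing i m hm).prod := by simp
    rw [this, wlen_prod]; simp

lemma wlen_one : wlen (1 : CoprodI M) = 0 := by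
  have : (1 : CoprodI M) = (Word.empty : Word M).prod := by simp [Word.prod_empty]
  rw [this, wlen_prod]; simp [Word.empty]

lemma eq_one_of_wlen_eq_zero {g : CoprodI M} (h : wlen g = 0) : g = 1 := by
  have h2 : (Word.equiv (M := M) g).toList = [] := List.length_eq_zero_iff.mp h
  have := prod_equiv g
  rw [word_prod_eq, h2] at this
  simpa using this.symm

/-! ### hyperbolic powers -/

def hypList (i j : ι) (a : M i) (b : M j) : ℕ → List (Σ i, M i)
  | 0 => []
  | n + 1 => ⟨i, a⟩ :: ⟨j, b⟩ :: hypList i j a b n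

lemma hypList_length (i j : ι) (a : M i) (b : M j) (n : ℕ) :
    (hypList i j a b n).length = 2 * n := by
  induction n with
  | zero => rfl
  | succ n ih => simp [hypList, ih]; omega

lemma hypList_ne_one (i j : ι) (a : M i) (b : M j) (ha : a ≠ 1) (hb : b ≠ 1) (n : ℕ) :
    ∀ l ∈ hypList i j a b n, Sigma.snd l ≠ 1 := by
  induction n with
  | zero => simp [hypList]
  | succ n ih =>
      intro l hl
      simp only [hypList, List.mem_cons] at hl
      rcases hl with rfl | rfl | hl
      · exact ha
      · exact hb
      · exact ih l hl

lemma hypList_chain (i j : ι) (a : M i) (b : M j) (hij : i ≠ j) (n : ℕ) :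
    (hypList i j a b n).Chain' (fun l l' => Sigma.fst l ≠ Sigma.fst l') ∧
      ((⟨j, b⟩ : Σ i, M i) :: hypList i j a b n).Chain'
        (fun l l' => Sigma.fst l ≠ Sigma.fst l') := by
  induction n with
  | zero => exact ⟨List.isChain_nil, List.isChain_singleton _⟩
  | succ n ih =>
      constructor
      · rw [hypList]; unfold List.Chain'; rw [List.isChain_cons_cons]
        exact ⟨hij, ih.2⟩
      · rw [hypList]; unfold List.Chain'; rw [List.isChain_cons_cons]
        refine ⟨Ne.symm hij, ?_⟩
        rw [List.isChain_cons_cons]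
        exact ⟨hij, ih.2⟩

lemma hypList_listProd (i j : ι) (a : M i) (b : M j) (n : ℕ) :
    listProd (hypList i j a b n) = (of a * of b) ^ n := by
  induction n with
  | zero => simp [hypList]
  | succ n ih => rw [hypList, listProd_cons, listProd_cons, ih, pow_succ']; group

/-- Word for `(of a * of b)^n`. -/
def hypWord (i j : ι) (a : M i) (b : M j) (hij : i ≠ j) (ha : a ≠ 1) (hb : b ≠ 1) (n : ℕ) :
    Word M where
  toList := hypList i j a b n
  ne_one := hypList_ne_one i j a b ha hb n
  chain_ne := (hypList_chain i j a b hij n).1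

lemma wlen_hyp_pow {i j : ι} {a : M i} {b : M j} (hij : i ≠ j) (ha : a ≠ 1) (hb : b ≠ 1)
    (n : ℕ) : wlen ((of a * of b) ^ n) = 2 * n := by
  have : ((of a * of b : CoprodI M)) ^ n = (hypWord i j a b hij ha hb n).prod := by
    rw [word_prod_eq]
    exact (hypList_listProd i j a b n).symm
  rw [this, wlen_prod]
  exact hypList_length i j a b n

lemma hyp_inv {i j : ι} (a : M i) (b : M j) :
    (of a * of b : CoprodI M)⁻¹ = of b⁻¹ * of a⁻¹ := by
  rw [mul_inv_rev]; simp

lemma wlen_hyp_zpow {i j : ι} {a : M i} {b : M j} (hij : i ≠ j) (ha : a ≠ 1) (hb : b ≠ 1)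
    (n : ℤ) : wlen ((of a * of b) ^ n) = 2 * n.natAbs := by
  rcases n with n | n
  · rw [Int.ofNat_eq_coe, zpow_natCast, wlen_hyp_pow hij ha hb]; simp
  · rw [zpow_negSucc, ← inv_pow, hyp_inv]
    rw [wlen_hyp_pow (Ne.symm hij) (by simpa using hb) (by simpa using ha)]
    simp

/-! ### centralizer combinatorics -/

lemma hypWord_one_prod {i j : ι} (hij : i ≠ j) {a : M i} {b : M j} (ha : a ≠ 1) (hb : b ≠ 1) :
    (hypWord i j a b hij ha hb 1).prod = of a * of b := by
  rw [word_prod_eq]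
  show listProd (hypList i j a b 1) = _
  rw [hypList_listProd, pow_one]

lemma hypWord_one_toList {i j : ι} (hij : i ≠ j) {a : M i} {b : M j} (ha : a ≠ 1) (hb : b ≠ 1) :
    (hypWord i j a b hij ha hb 1).toList = [⟨i, a⟩, ⟨j, b⟩] := rfl

lemma hypWord_one_getLast? {i j : ι} (hij : i ≠ j) {a : M i} {b : M j} (ha : a ≠ 1)
    (hb : b ≠ 1) : (hypWord i j a b hij ha hb 1).toList.getLast? = some ⟨j, b⟩ := rfl

lemma hypWord_one_head? {i j : ι} (hij : i ≠ j) {a : M i} {b : M j} (ha : a ≠ 1)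
    (hb : b ≠ 1) : (hypWord i j a b hij ha hb 1).toList.head? = some ⟨i, a⟩ := rfl

/-- If a word commuting with `of a * of b` starts and ends with an `i`-letter, contradiction. -/
lemma lemY {i j : ι} (hij : i ≠ j) {a : M i} {b : M j} (ha : a ≠ 1) (hb : b ≠ 1)
    (w : Word M) (hn : w.toList ≠ [])
    (h1 : (w.toList.head hn).fst = i) (h2 : (w.toList.getLast hn).fst = i)
    (hcomm : w.prod * (of a * of b) = (of a * of b) * w.prod) : False := by
  -- right hand side is a genuinely reduced word of length `n+2`
  have hj1 : ∀ x ∈ (hypWord i j a b hij ha hb 1).toList.getLast?,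
      ∀ y ∈ w.toList.head?, Sigma.fst x ≠ Sigma.fst y := by
    rw [hypWord_one_getLast?, List.head?_eq_head hn]
    rintro x hx y hy
    simp only [Option.mem_def, Option.some.injEq] at hx hy
    subst hx; subst hy
    rw [h1]
    exact Ne.symm hij
  have hlenR : wlen ((of a * of b) * w.prod) = w.toList.length + 2 := by
    have : (of a * of b) * w.prod = (wappend (hypWord i j a b hij ha hb 1) w hj1).prod := by
      rw [wappend_prod, hypWord_one_prod]
    rw [this, wlen_prod, wappend_toList, List.length_append, hypWord_one_toList]
    simp [add_comm]
  -- left hand side is short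
  rcases hL : w.toList.getLast hn with ⟨k, xv⟩
  have hk : k = i := by rw [hL] at h2; exact h2
  subst hk
  have hdec : w.prod = (winit w).prod * of xv := by
    rw [prod_eq_init_mul_last w hn, hL]
  have hlenL : wlen (w.prod * (of a * of b)) ≤ w.toList.length + 1 := by
    have hmerge : w.prod * (of a * of b) = (winit w).prod * of (xv * a) * of b := by
      rw [hdec, map_mul]; group
    rw [hmerge]
    calc wlen ((winit w).prod * of (xv * a) * of b)
        ≤ wlen ((winit w).prod * of (xv * a)) + wlen (of b : CoprodI M) := wlen_mul_le _ _
      _ ≤ wlen ((winit w).prod) + wlen (of (xv * a) : CoprodI M) + wlen (of b : CoprodI M) := by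
          have := wlen_mul_le ((winit w).prod) (of (xv * a))
          omega
      _ ≤ wlen ((winit w).prod) + 1 + 1 := by
          have := wlen_of_le (M := M) k (xv * a)
          have := wlen_of_le (M := M) j b
          omega
      _ ≤ w.toList.length + 1 := by
          rw [wlen_prod]
          have h5 : (winit w).toList.length = w.toList.length - 1 := by
            simp [winit]
          have hpos : 0 < w.toList.length := List.length_pos_iff.mpr hn
          omega
  rw [hcomm, hlenR] at hlenL
  omega

/-- peeling lemma : a commuting word starting with an `i`-letter and ending with a `j`-letter
starts with `of a * of b`. -/
lemma lemX {i j : ι} (hij : i ≠ j) {a : M i} {b : M j} (ha : a ≠ 1) (hb : b ≠ 1)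
    (w : Word M) (hn : w.toList ≠ [])
    (h1 : (w.toList.head hn).fst = i) (h2 : (w.toList.getLast hn).fst = j)
    (hcomm : w.prod * (of a * of b) = (of a * of b) * w.prod) :
    ∃ g₂ : CoprodI M, w.prod = (of a * of b) * g₂ ∧ wlen g₂ + 2 = w.toList.length ∧
      g₂ * (of a * of b) = (of a * of b) * g₂ := by
  have hj1 : ∀ x ∈ (hypWord i j a b hij ha hb 1).toList.getLast?,
      ∀ y ∈ w.toList.head?, Sigma.fst x ≠ Sigma.fst y := by
    rw [hypWord_one_getLast?, List.head?_eq_head hn]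
    rintro x hx y hy
    simp only [Option.mem_def, Option.some.injEq] at hx hy
    subst hx; subst hy
    rw [h1]
    exact Ne.symm hij
  have hj2 : ∀ x ∈ w.toList.getLast?,
      ∀ y ∈ (hypWord i j a b hij ha hb 1).toList.head?, Sigma.fst x ≠ Sigma.fst y := by
    rw [hypWord_one_head?, List.getLast?_eq_getLast_of_ne_nil hn]
    rintro x hx y hy
    simp only [Option.mem_def, Option.some.injEq] at hx hy
    subst hx; subst hy
    rw [h2]
    exact Ne.symm hij
  have hWeq : (wappend w (hypWord i j a b hij ha hb 1) hj2).prod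
      = (wappend (hypWord i j a b hij ha hb 1) w hj1).prod := by
    rw [wappend_prod, wappend_prod, hypWord_one_prod, hcomm]
  have hlists : w.toList ++ [⟨i, a⟩, ⟨j, b⟩]
      = (⟨i, a⟩ : Σ i, M i) :: (⟨j, b⟩ : Σ i, M i) :: w.toList := by
    have := congrArg Word.toList (prod_injective hWeq)
    rw [wappend_toList, wappend_toList, hypWord_one_toList] at this
    simpa using this
  rcases hlist : w.toList with _ | ⟨x₁, l₁⟩
  · exact absurd hlist hn
  rcases l₁ with _ | ⟨x₂, l₂⟩
  · -- length one : impossible since i ≠ j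
    exfalso
    rw [hlist] at hlists
    simp only [List.cons_append, List.nil_append, List.cons.injEq] at hlists
    exact hij (congrArg Sigma.fst hlists.2.1)
  · rw [hlist] at hlists
    simp only [List.cons_append, List.cons.injEq] at hlists
    obtain ⟨hx₁, hx₂, hrest⟩ := hlists
    subst hx₁; subst hx₂
    -- build the word for l₂
    have hne : ∀ l ∈ l₂, Sigma.snd l ≠ 1 := by
      intro l hl
      exact w.ne_one l (by rw [hlist]; exact List.mem_cons_of_mem _ (List.mem_cons_of_mem _ hl))
    have hch : l₂.Chain' fun l l' => Sigma.fst l ≠ Sigma.fst l' := by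
      have := w.chain_ne
      rw [hlist] at this
      exact this.tail.tail
    set W₂ : Word M := ⟨l₂, hne, hch⟩ with hW₂
    refine ⟨W₂.prod, ?_, ?_, ?_⟩
    · rw [word_prod_eq, hlist, listProd_cons, listProd_cons]
      rw [word_prod_eq]
      show _ = of a * of b * listProd l₂
      group
    · rw [wlen_prod]
      show l₂.length + 2 = _
      simp
    · have hid : W₂.prod = (of a * of b)⁻¹ * w.prod := by
        rw [word_prod_eq w, hlist, listProd_cons, listProd_cons]
        show listProd l₂ = _
        group
      rw [hid, mul_assoc, hcomm]
      group

/-- Centralizer of a hyperbolic element: two-factor case. -/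
lemma mem_zpowers_of_comm_hyp {i j : ι} (htwo : ∀ k : ι, k = i ∨ k = j) (hij : i ≠ j)
    {a : M i} {b : M j} (ha : a ≠ 1) (hb : b ≠ 1) {g : CoprodI M}
    (hcomm : g * (of a * of b) = (of a * of b) * g) :
    g ∈ Subgroup.zpowers (of a * of b : CoprodI M) := by
  suffices H : ∀ n (g : CoprodI M), wlen g = n →
      g * (of a * of b) = (of a * of b) * g →
      g ∈ Subgroup.zpowers (of a * of b : CoprodI M) from H _ g rfl hcomm
  clear hcomm g
  intro n
  induction n using Nat.strong_induction_on with
  | _ n ih =>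
    intro g hlen hcomm
    have hg : (Word.equiv (M := M) g).prod = g := prod_equiv g
    by_cases hnil : (Word.equiv (M := M) g).toList = []
    · have : g = 1 := by rw [← hg, word_prod_eq, hnil, listProd_nil]
      rw [this]; exact Subgroup.one_mem _
    · set w := Word.equiv (M := M) g with hwdef
      have hwl : wlen g = w.toList.length := rfl
      have hcomm' : w.prod * (of a * of b) = (of a * of b) * w.prod := by
        rw [hg]; exact hcomm
      have hcommInv : w.prod * (of b⁻¹ * of a⁻¹) = (of b⁻¹ * of a⁻¹) * w.prod := by
        have c1 : Commute w.prod (of a * of b) := hcomm'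
        have c2 := c1.inv_right
        rw [hyp_inv] at c2
        exact c2
      rcases htwo (w.toList.head hnil).fst with hh | hh <;>
        rcases htwo (w.toList.getLast hnil).fst with hl | hl
      · exact (lemY hij ha hb w hnil hh hl hcomm').elim
      · obtain ⟨g₂, hg₂, hlen₂, hcomm₂⟩ := lemX hij ha hb w hnil hh hl hcomm'
        have hmem := ih (wlen g₂) (by omega) g₂ rfl hcomm₂
        have he : g = (of a * of b) * g₂ := by rw [← hg]; exact hg₂
        rw [he]
        exact Subgroup.mul_mem _ (Subgroup.mem_zpowers _) hmem
      · obtain ⟨g₂, hg₂, hlen₂, hcomm₂⟩ := lemX (Ne.symm hij) (inv_ne_one.mpr hb)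
          (inv_ne_one.mpr ha) w hnil hh hl hcommInv
        have hcomm₂' : g₂ * (of a * of b) = (of a * of b) * g₂ := by
          have c1 : Commute g₂ (of b⁻¹ * of a⁻¹) := hcomm₂
          have c2 := c1.inv_right
          rw [show (of b⁻¹ * of a⁻¹ : CoprodI M)⁻¹ = of a * of b by
            rw [mul_inv_rev]; simp] at c2
          exact c2
        have hmem := ih (wlen g₂) (by omega) g₂ rfl hcomm₂'
        have he : g = (of b⁻¹ * of a⁻¹) * g₂ := by rw [← hg]; exact hg₂
        rw [he, show (of b⁻¹ * of a⁻¹ : CoprodI M) = (of a * of b)⁻¹ by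
          rw [mul_inv_rev]; simp]
        exact Subgroup.mul_mem _ (Subgroup.inv_mem _ (Subgroup.mem_zpowers _)) hmem
      · exact (lemY (Ne.symm hij) (inv_ne_one.mpr hb) (inv_ne_one.mpr ha)
          w hnil hh hl hcommInv).elim


/-! ### elliptic elements : conjugating a factor letter to a factor letter -/

section Elliptic

variable {N : ι → Type*} [∀ i, CommGroup (N i)] [∀ i, DecidableEq (N i)]

lemma conj_of_eq_of {i : ι} {g : CoprodI N} {α c : N i} (hα : α ≠ 1)
    (heq : g * of α * g⁻¹ = of c) : ∃ d : N i, g = of d := by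
  suffices H : ∀ n (g : CoprodI N) (c : N i), wlen g = n → g * of α * g⁻¹ = of c →
      ∃ d : N i, g = of d from H _ g c rfl heq
  clear heq g c
  intro n
  induction n using Nat.strong_induction_on with
  | _ n ih =>
    intro g c hlen heq
    have hg : (Word.equiv (M := N) g).prod = g := prod_equiv g
    by_cases hnil : (Word.equiv (M := N) g).toList = []
    · refine ⟨1, ?_⟩
      rw [← hg, word_prod_eq, hnil, listProd_nil, map_one]
    · set w := Word.equiv (M := N) g with hwdef
      have hwl : wlen g = w.toList.length := rfl
      have hpos : 0 < w.toList.length := List.length_pos_iff.mpr hnil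
      rcases hL : w.toList.getLast hnil with ⟨k, xv⟩
      by_cases hk : k = i
      · subst hk
        have hdec : g = (winit w).prod * of xv := by
          rw [← hg, prod_eq_init_mul_last w hnil, hL]
        have hstep : (winit w).prod * of α * ((winit w).prod)⁻¹ = of c := by
          have hxa : (of xv * (of α * (of xv)⁻¹) : CoprodI N) = of α := by
            rw [← map_inv, ← map_mul, ← map_mul]
            congr 1
            rw [← mul_assoc, mul_comm xv α, mul_assoc, mul_inv_cancel, mul_one]
          calc (winit w).prod * of α * ((winit w).prod)⁻¹
              = (winit w).prod * (of xv * (of α * (of xv)⁻¹)) * ((winit w).prod)⁻¹ := by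
                rw [hxa]
            _ = ((winit w).prod * of xv) * of α * (((winit w).prod * of xv))⁻¹ := by
                group
            _ = of c := by rw [← hdec]; exact heq
        have hlt : wlen ((winit w).prod) < n := by
          rw [wlen_prod]
          have h5 : (winit w).toList.length = w.toList.length - 1 := by simp [winit]
          omega
        obtain ⟨d, hd⟩ := ih _ hlt _ c rfl hstep
        exact ⟨d * xv, by rw [hdec, hd, ← map_mul]⟩
      · -- last letter not in factor i : the conjugate is a long reduced word, contradiction
        exfalso
        have hj1 : ∀ x ∈ w.toList.getLast?, ∀ y ∈ (sing i α hα).toList.head?,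
            Sigma.fst x ≠ Sigma.fst y := by
          rw [List.getLast?_eq_getLast_of_ne_nil hnil, hL]
          rintro x hx y hy
          simp only [sing_toList, List.head?_cons, Option.mem_def, Option.some.injEq] at hx hy
          subst hx; subst hy
          exact hk
        set W₁ := wappend w (sing i α hα) hj1 with hW₁
        have hW₁l : W₁.toList.getLast? = some ⟨i, α⟩ := by
          rw [hW₁, wappend_toList, sing_toList]
          exact List.getLast?_concat
        have hj2 : ∀ x ∈ W₁.toList.getLast?, ∀ y ∈ (winv w).toList.head?,
            Sigma.fst x ≠ Sigma.fst y := by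
          rw [hW₁l]
          have hmapne : (w.toList.map fun x => (⟨x.1, x.2⁻¹⟩ : Σ i, N i)) ≠ [] := by
            simpa using hnil
          have hh : (winv w).toList.head? =
              some ⟨(w.toList.getLast hnil).1, (w.toList.getLast hnil).2⁻¹⟩ := by
            show ((w.toList.map fun x => (⟨x.1, x.2⁻¹⟩ : Σ i, N i)).reverse).head? = _
            rw [List.head?_reverse, List.getLast?_map,
              List.getLast?_eq_getLast_of_ne_nil hnil]
            rfl
          rw [hh, hL]
          rintro x hx y hy
          simp only [Option.mem_def, Option.some.injEq] at hx hy
          subst hx; subst hy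
          exact fun h => hk h.symm
        set W := wappend W₁ (winv w) hj2 with hW
        have hprodW : W.prod = of c := by
          rw [hW, wappend_prod, hW₁, wappend_prod, sing_prod, winv_prod, hg]
          exact heq
        have hlenW : W.toList.length = 2 * w.toList.length + 1 := by
          rw [hW, wappend_toList, hW₁, wappend_toList]
          simp
          omega
        have : wlen (of c : CoprodI N) = 2 * w.toList.length + 1 := by
          rw [← hprodW, wlen_prod, hlenW]
        have := wlen_of_le (M := N) i c
        omega

end Elliptic


/-! ### commuting conjugates of short elements -/

lemma commute_conj_inv {G : Type*} [Group G] {u v : G} (h : Commute u v) (x : G) :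
    Commute (x⁻¹ * u * x) (x⁻¹ * v * x) := by
  have e : ∀ s t : G, (x⁻¹ * s * x) * (x⁻¹ * t * x) = x⁻¹ * (s * t) * x := by
    intro s t; group
  show (x⁻¹ * u * x) * (x⁻¹ * v * x) = (x⁻¹ * v * x) * (x⁻¹ * u * x)
  rw [e, e, h.eq]

section QLevel

variable {N : ι → Type*} [∀ i, CommGroup (N i)] [∀ i, DecidableEq (N i)]

lemma QEE {i : ι} {α : N i} (hα : α ≠ 1) (p q : CoprodI N)
    (hcomm : Commute (p * of α * p⁻¹) (q * of α * q⁻¹)) :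
    q * of α * q⁻¹ = p * of α * p⁻¹ := by
  set r := p⁻¹ * q with hr
  have h1 : Commute (of α : CoprodI N) (r * of α * r⁻¹) := by
    have h2 := commute_conj_inv hcomm p
    have e1 : p⁻¹ * (p * of α * p⁻¹) * p = (of α : CoprodI N) := by group
    have e2 : p⁻¹ * (q * of α * q⁻¹) * p = r * of α * r⁻¹ := by rw [hr]; group
    rw [e1, e2] at h2
    exact h2
  have heq : (r * of α * r⁻¹) * of α * (r * of α * r⁻¹)⁻¹ = (of α : CoprodI N) := by
    have h3 := h1.symm.eq
    rw [h3]
    group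
  obtain ⟨d, hd⟩ := conj_of_eq_of hα heq
  obtain ⟨d', hd'⟩ := conj_of_eq_of hα hd
  have hfix : r * of α * r⁻¹ = (of α : CoprodI N) := by
    rw [hd', ← map_inv, ← map_mul, ← map_mul]
    congr 1
    rw [mul_comm d' α, mul_assoc, mul_inv_cancel, mul_one]
  have hq : q * of α * q⁻¹ = p * (r * of α * r⁻¹) * p⁻¹ := by rw [hr]; group
  rw [hq, hfix]

lemma QEH {i i' j' : ι} (htwo' : ∀ k : ι, k = i' ∨ k = j') (hij' : i' ≠ j')
    {α : N i} {a' : N i'} {b' : N j'} (hα : α ≠ 1) (ha' : a' ≠ 1) (hb' : b' ≠ 1)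
    (p q : CoprodI N)
    (hcomm : Commute (p * of α * p⁻¹) (q * (of a' * of b') * q⁻¹)) : False := by
  set t' := (of a' * of b' : CoprodI N) with ht'
  set r := q⁻¹ * p with hr
  have h1 : Commute (r * of α * r⁻¹) t' := by
    have h2 := commute_conj_inv hcomm q
    have e1 : q⁻¹ * (p * of α * p⁻¹) * q = r * of α * r⁻¹ := by rw [hr]; group
    have e2 : q⁻¹ * (q * t' * q⁻¹) * q = t' := by group
    rw [e1, e2] at h2
    exact h2
  have hmem : r * of α * r⁻¹ ∈ Subgroup.zpowers t' :=
    mem_zpowers_of_comm_hyp htwo' hij' ha' hb' h1.eq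
  obtain ⟨n, hn⟩ := Subgroup.mem_zpowers_iff.mp hmem
  by_cases hn0 : n = 0
  · subst hn0
    rw [zpow_zero] at hn
    have hone : (of α : CoprodI N) = 1 := by
      have : r * of α * r⁻¹ = 1 := hn.symm
      have h4 : (of α : CoprodI N) = r⁻¹ * 1 * r := by
        rw [← this]; group
      rw [h4]; group
    exact hα (of_injective i (by rw [hone, map_one]))
  · have hbound : ∀ Nn : ℕ, 2 * (n.natAbs * Nn) ≤ wlen r + wlen r⁻¹ + 1 := by
      intro Nn
      have hpow : t' ^ (n * (Nn : ℤ)) = r * of (α ^ Nn) * r⁻¹ := by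
        rw [zpow_mul, hn, zpow_natCast, map_pow]
        exact conj_pow
      have hl1 : wlen (t' ^ (n * (Nn : ℤ))) = 2 * (n.natAbs * Nn) := by
        rw [ht', wlen_hyp_zpow hij' ha' hb']
        simp [Int.natAbs_mul]
      rw [hpow] at hl1
      have hl2 : wlen (r * of (α ^ Nn) * r⁻¹) ≤ wlen r + wlen r⁻¹ + 1 := by
        calc wlen (r * of (α ^ Nn) * r⁻¹)
            ≤ wlen (r * of (α ^ Nn)) + wlen r⁻¹ := wlen_mul_le _ _
          _ ≤ wlen r + wlen (of (α ^ Nn) : CoprodI N) + wlen r⁻¹ := by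
              have := wlen_mul_le r (of (α ^ Nn))
              omega
          _ ≤ wlen r + wlen r⁻¹ + 1 := by
              have := wlen_of_le (M := N) i (α ^ Nn)
              omega
      omega
    have habs : 1 ≤ n.natAbs := by
      rcases Int.natAbs_eq_zero.not.mpr hn0 with h
      omega
    have := hbound (wlen r + wlen r⁻¹ + 1)
    nlinarith

lemma QHH {i j i' j' : ι} (htwo : ∀ k : ι, k = i ∨ k = j) (hij : i ≠ j) (hij' : i' ≠ j')
    {a : N i} {b : N j} {a' : N i'} {b' : N j'}
    (ha : a ≠ 1) (hb : b ≠ 1) (ha' : a' ≠ 1) (hb' : b' ≠ 1)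
    (p q : CoprodI N)
    (hcomm : Commute (p * (of a * of b) * p⁻¹) (q * (of a' * of b') * q⁻¹)) :
    ∃ n : ℤ, (n = 1 ∨ n = -1) ∧
      q * (of a' * of b') * q⁻¹ = (p * (of a * of b) * p⁻¹) ^ n := by
  set t := (of a * of b : CoprodI N) with ht
  set t' := (of a' * of b' : CoprodI N) with ht'
  set r := p⁻¹ * q with hr
  have h1 : Commute t (r * t' * r⁻¹) := by
    have h2 := commute_conj_inv hcomm p
    have e1 : p⁻¹ * (p * t * p⁻¹) * p = t := by group
    have e2 : p⁻¹ * (q * t' * q⁻¹) * p = r * t' * r⁻¹ := by rw [hr]; group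
    rw [e1, e2] at h2
    exact h2
  have hmem : r * t' * r⁻¹ ∈ Subgroup.zpowers t :=
    mem_zpowers_of_comm_hyp htwo hij ha hb h1.symm.eq
  obtain ⟨n, hn⟩ := Subgroup.mem_zpowers_iff.mp hmem
  have hne : n ≠ 0 := by
    rintro rfl
    rw [zpow_zero] at hn
    have hone : t' = 1 := by
      have : r * t' * r⁻¹ = 1 := hn.symm
      have h4 : t' = r⁻¹ * 1 * r := by rw [← this]; group
      rw [h4]; group
    have h5 : wlen t' = 2 := by
      have := wlen_hyp_pow hij' ha' hb' 1
      rw [pow_one] at this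
      rw [ht', this]
    rw [hone, wlen_one] at h5
    omega
  have hbound : ∀ Nn : ℕ, 2 * (n.natAbs * Nn) ≤ wlen r + wlen r⁻¹ + 2 * Nn := by
    intro Nn
    have hpow : t ^ (n * (Nn : ℤ)) = r * t' ^ Nn * r⁻¹ := by
      rw [zpow_mul, hn, zpow_natCast]
      exact conj_pow
    have hl1 : wlen (t ^ (n * (Nn : ℤ))) = 2 * (n.natAbs * Nn) := by
      rw [ht, wlen_hyp_zpow hij ha hb]
      simp [Int.natAbs_mul]
    rw [hpow] at hl1
    have hl2 : wlen (r * t' ^ Nn * r⁻¹) ≤ wlen r + wlen r⁻¹ + 2 * Nn := by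
      calc wlen (r * t' ^ Nn * r⁻¹)
          ≤ wlen (r * t' ^ Nn) + wlen r⁻¹ := wlen_mul_le _ _
        _ ≤ wlen r + wlen (t' ^ Nn) + wlen r⁻¹ := by
            have := wlen_mul_le r (t' ^ Nn)
            omega
        _ = wlen r + 2 * Nn + wlen r⁻¹ := by rw [ht', wlen_hyp_pow hij' ha' hb']
        _ = wlen r + wlen r⁻¹ + 2 * Nn := by omega
    omega
  have habs : n.natAbs ≤ 1 := by
    by_contra hgt
    push_neg at hgt
    have h6 := hbound (wlen r + wlen r⁻¹ + 1)
    nlinarith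
  have hcase : n = 1 ∨ n = -1 := by omega
  refine ⟨n, hcase, ?_⟩
  have hq : q * t' * q⁻¹ = p * (r * t' * r⁻¹) * p⁻¹ := by rw [hr]; group
  rw [hq, ← hn]
  exact conj_zpow.symm

end QLevel



section AltWord

variable {G : Type*} [Monoid G]

lemma altWord_succ (a b : G) (n : ℕ) : altWord a b (n + 1) = a * altWord b a n := rfl

lemma altWord_add_two (a b : G) (n : ℕ) : altWord a b (n + 2) = a * b * altWord a b n := by
  rw [altWord_succ, altWord_succ, mul_assoc]

lemma altWord_even (a b : G) (k : ℕ) : altWord a b (2 * k) = (a * b) ^ k := by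
  induction k with
  | zero => simp [altWord]
  | succ k ih =>
      have h : 2 * (k + 1) = 2 * k + 2 := by ring
      rw [h, altWord_add_two, ih, pow_succ']

lemma altWord_odd (a b : G) (k : ℕ) : altWord a b (2 * k + 1) = (a * b) ^ k * a := by
  induction k with
  | zero => simp [altWord]
  | succ k ih =>
      have h : 2 * (k + 1) + 1 = (2 * k + 1) + 2 := by ring
      rw [h, altWord_add_two, ih, pow_succ']
      simp [mul_assoc]

lemma map_altWord {H : Type*} [Monoid H] (f : G →* H) (a b : G) (n : ℕ) :
    f (altWord a b n) = altWord (f a) (f b) n := by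
  induction n generalizing a b with
  | zero => simp [altWord]
  | succ n ih => rw [altWord_succ, map_mul, ih, altWord_succ]

lemma altWord_self (a : G) (n : ℕ) : altWord a a n = a ^ n := by
  induction n with
  | zero => simp [altWord]
  | succ n ih => rw [altWord_succ, ih, pow_succ']

lemma pow_swap (a b : G) (k : ℕ) : (a * b) ^ k * a = a * (b * a) ^ k := by
  induction k with
  | zero => simp
  | succ k ih =>
      rw [pow_succ', mul_assoc, ih, pow_succ']
      simp [mul_assoc]

end AltWord

/-! ### homomorphisms out of cyclic groups -/

/-- `x ↦ x ^ val` as a hom `Multiplicative (ZMod n) →* H` for `x` with `x ^ n = 1`. -/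
def zmodMulHom {H : Type*} [Group H] (n : ℕ) [NeZero n] (x : H) (hx : x ^ n = 1) :
    Multiplicative (ZMod n) →* H where
  toFun c := x ^ (Multiplicative.toAdd c).val
  map_one' := by
    show x ^ (0 : ZMod n).val = 1
    rw [ZMod.val_zero, pow_zero]
  map_mul' c d := by
    show x ^ ((Multiplicative.toAdd c) + (Multiplicative.toAdd d)).val = _
    rw [← pow_add]
    have horder : orderOf x ∣ n := orderOf_dvd_of_pow_eq_one hx
    have hmod : ((Multiplicative.toAdd c) + (Multiplicative.toAdd d)).val
        ≡ (Multiplicative.toAdd c).val + (Multiplicative.toAdd d).val [MOD n] := by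
      rw [ZMod.val_add]
      exact Nat.mod_modEq _ n
    exact pow_eq_pow_iff_modEq.mpr (hmod.of_dvd horder)

lemma zmodMulHom_natCast {H : Type*} [Group H] (n : ℕ) [NeZero n] (x : H) (hx : x ^ n = 1)
    (k : ℕ) : zmodMulHom n x hx (Multiplicative.ofAdd ((k : ℕ) : ZMod n)) = x ^ k := by
  show x ^ (ZMod.val ((k : ℕ) : ZMod n)) = x ^ k
  have hmod : (ZMod.val ((k : ℕ) : ZMod n)) ≡ k [MOD n] := by
    rw [ZMod.val_natCast]
    exact Nat.mod_modEq _ _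
  exact pow_eq_pow_iff_modEq.mpr (hmod.of_dvd (orderOf_dvd_of_pow_eq_one hx))

/-! ### the two-factor family -/

def fam (A B : Type) : Bool → Type := fun t => bif t then B else A

instance famCommGroup (A B : Type) [CommGroup A] [CommGroup B] (t : Bool) :
    CommGroup (fam A B t) :=
  match t with
  | false => (inferInstance : CommGroup A)
  | true => (inferInstance : CommGroup B)

instance famDecEq (A B : Type) [DecidableEq A] [DecidableEq B] (t : Bool) :
    DecidableEq (fam A B t) :=
  match t with
  | false => (inferInstance : DecidableEq A)
  | true => (inferInstance : DecidableEq B)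

/-- package two homs into a hom family on `fam A B`. -/
def famHom {A B K : Type} [CommGroup A] [CommGroup B] [Group K]
    (fA : A →* K) (fB : B →* K) : ∀ t, fam A B t →* K := fun t =>
  match t with
  | false => fA
  | true => fB

lemma bool_two : ∀ k : Bool, k = true ∨ k = false := by decide

lemma bool_two' : ∀ k : Bool, k = false ∨ k = true := by decide

/-! ### generic facts about the dihedral Artin group -/

section Dihedral

variable (m : ℕ)

/-- first generator -/
def ga : PresentedGroup (dihedralRels m) := PresentedGroup.of 0

/-- second generator -/
def gb : PresentedGroup (dihedralRels m) := PresentedGroup.of 1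

lemma grel : altWord (ga m) (gb m) m = altWord (gb m) (ga m) m := by
  have hmem : (altWord (FreeGroup.of 0) (FreeGroup.of 1) m *
      (altWord (FreeGroup.of 1) (FreeGroup.of 0) m)⁻¹) ∈ dihedralRels m := rfl
  have h1 : PresentedGroup.mk (dihedralRels m) (altWord (FreeGroup.of 0) (FreeGroup.of 1) m *
      (altWord (FreeGroup.of 1) (FreeGroup.of 0) m)⁻¹) = 1 := by
    apply (QuotientGroup.eq_one_iff _).mpr
    exact Subgroup.subset_normalClosure hmem
  rw [map_mul, map_inv, map_altWord, map_altWord] at h1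
  exact mul_inv_eq_one.mp h1

/-- the exponent-sum homomorphism to `ℤ` (multiplicatively written) -/
def theta : PresentedGroup (dihedralRels m) →* Multiplicative ℤ :=
  PresentedGroup.toGroup (f := fun _ => Multiplicative.ofAdd (1 : ℤ)) (by
    intro r hr
    rw [dihedralRels, Set.mem_singleton_iff] at hr
    subst hr
    rw [map_mul, map_inv, map_altWord, map_altWord, FreeGroup.lift_apply_of, FreeGroup.lift_apply_of]
    exact mul_inv_cancel _)

lemma theta_of (x : Fin 2) : theta m (PresentedGroup.of x) = Multiplicative.ofAdd (1 : ℤ) :=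
  PresentedGroup.toGroup.of _

/-- assembling the final conclusion from data about the quotient `Q` -/
lemma assembly {Q : Type*} [Group Q] (π : PresentedGroup (dihedralRels m) →* Q)
    (z : PresentedGroup (dihedralRels m)) (e : ℤ)
    (hker : ∀ w, π w = 1 → w ∈ Subgroup.zpowers z)
    (hθz : theta m z = Multiplicative.ofAdd e) (he : 3 ≤ e)
    (g h : PresentedGroup (dihedralRels m)) (x y : Fin 2)
    (hQ : ∃ n : ℤ, (n = 1 ∨ n = -1) ∧
      π (h * PresentedGroup.of y * h⁻¹) = (π (g * PresentedGroup.of x * g⁻¹)) ^ n) :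
    g * PresentedGroup.of x * g⁻¹ = h * PresentedGroup.of y * h⁻¹ := by
  obtain ⟨n, hn1, hn2⟩ := hQ
  set u := g * PresentedGroup.of x * g⁻¹ with hu
  set v := h * PresentedGroup.of y * h⁻¹ with hv
  have hπ : π (v * (u ^ n)⁻¹) = 1 := by
    rw [map_mul, map_inv, map_zpow, hn2, mul_inv_cancel]
  obtain ⟨s, hsz⟩ := Subgroup.mem_zpowers_iff.mp (hker _ hπ)
  have hθu : theta m u = Multiplicative.ofAdd (1 : ℤ) := by
    rw [hu, map_mul, map_mul, map_inv, theta_of]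
    exact mul_inv_cancel_comm _ _
  have hθv : theta m v = Multiplicative.ofAdd (1 : ℤ) := by
    rw [hv, map_mul, map_mul, map_inv, theta_of]
    exact mul_inv_cancel_comm _ _
  have harith : s * e = 1 - n := by
    have h2 := congrArg (theta m) hsz
    rw [map_zpow, map_mul, map_inv, map_zpow, hθu, hθv, hθz] at h2
    have h3 := congrArg Multiplicative.toAdd h2
    simpa [sub_eq_add_neg, mul_comm] using h3
  rcases hn1 with rfl | rfl
  · have hs0 : s = 0 := by
      have h4 : s * e = 0 := by rw [harith]; norm_num
      rcases mul_eq_zero.mp h4 with h5 | h5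
      · exact h5
      · omega
    have h6 : v * (u ^ (1:ℤ))⁻¹ = 1 := by rw [← hsz, hs0, zpow_zero]
    rw [zpow_one] at h6
    exact (mul_inv_eq_one.mp h6).symm
  · exfalso
    have h7 : s * e = 2 := by rw [harith]; norm_num
    rcases lt_trichotomy s 0 with h8 | h8 | h8
    · nlinarith
    · rw [h8, zero_mul] at h7
      exact absurd h7 (by norm_num)
    · nlinarith

end Dihedral


/-! ### the even case : `m = 2k`, quotient is `ℤ * C_k` -/

abbrev QE (k : ℕ) : Type := Monoid.CoprodI (fam (Multiplicative ℤ) (Multiplicative (ZMod k)))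

def ofZ (k : ℕ) : Multiplicative ℤ →* QE k :=
  @Monoid.CoprodI.of Bool (fam (Multiplicative ℤ) (Multiplicative (ZMod k)))
    (fun t => Group.toDivInvMonoid.toMonoid) false

def ofZM (k : ℕ) : Multiplicative (ZMod k) →* QE k :=
  @Monoid.CoprodI.of Bool (fam (Multiplicative ℤ) (Multiplicative (ZMod k)))
    (fun t => Group.toDivInvMonoid.toMonoid) true

lemma even_case (k : ℕ) (hk : 2 ≤ k) (g h : PresentedGroup (dihedralRels (2 * k)))
    (x y : Fin 2)
    (hcomm : Commute (g * PresentedGroup.of x * g⁻¹) (h * PresentedGroup.of y * h⁻¹)) :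
    g * PresentedGroup.of x * g⁻¹ = h * PresentedGroup.of y * h⁻¹ := by
  haveI : NeZero k := ⟨by omega⟩
  haveI : Fact (1 < k) := ⟨by omega⟩
  set a : PresentedGroup (dihedralRels (2 * k)) := PresentedGroup.of 0 with ha
  set b : PresentedGroup (dihedralRels (2 * k)) := PresentedGroup.of 1 with hb
  -- the central element
  set z : PresentedGroup (dihedralRels (2 * k)) := (a * b) ^ k with hz
  have hrel : z = (b * a) ^ k := by
    have h1 := grel (2 * k)
    rw [altWord_even, altWord_even] at h1
    exact h1
  have hcomm_za : z * a = a * z := by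
    nth_rewrite 2 [hrel]
    rw [hz]
    exact pow_swap a b k
  have hcomm_zb : z * b = b * z := by
    nth_rewrite 1 [hrel]
    rw [hz]
    exact pow_swap b a k
  have hcent : ∀ w : PresentedGroup (dihedralRels (2 * k)), z * w = w * z := by
    intro w
    have hmem := PresentedGroup.generated_by (dihedralRels (2 * k))
      (Subgroup.centralizer {z}) (by
        intro j
        rw [Subgroup.mem_centralizer_iff]
        intro h' hh'
        rw [Set.mem_singleton_iff] at hh'
        subst hh'
        fin_cases j
        · exact hcomm_za
        · exact hcomm_zb) w
    rw [Subgroup.mem_centralizer_iff] at hmem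
    exact hmem z rfl
  have hnormal : (Subgroup.zpowers z).Normal := by
    constructor
    intro x' hx' g'
    obtain ⟨n, hn⟩ := Subgroup.mem_zpowers_iff.mp hx'
    have hcz : Commute z g' := hcent g'
    have hfix : g' * x' * g'⁻¹ = x' := by
      rw [← hn]
      have h2 : g' * z ^ n = z ^ n * g' := ((hcz.zpow_left n).eq).symm
      calc g' * z ^ n * g'⁻¹ = z ^ n * g' * g'⁻¹ := by rw [h2]
        _ = z ^ n := by group
    rw [hfix]
    exact hx'
  haveI := hnormal
  set δ := QuotientGroup.mk' (Subgroup.zpowers z) with hδ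
  -- elements of the factors
  set aa : Multiplicative ℤ := Multiplicative.ofAdd (1 : ℤ) with haa
  set bb : Multiplicative (ZMod k) := Multiplicative.ofAdd (1 : ZMod k) with hbb
  have hbbk : bb ^ k = 1 := by
    rw [hbb, ← ofAdd_nsmul]
    have h3 : (k : ℕ) • (1 : ZMod k) = 0 := by
      simp [nsmul_eq_mul, ZMod.natCast_self]
    rw [h3, ofAdd_zero]
  have haane : aa ≠ 1 := by
    rw [haa]
    intro hcon
    have := congrArg Multiplicative.toAdd hcon
    simpa using this
  have haaine : aa⁻¹ ≠ 1 := by simpa using haane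
  have hbbne : bb ≠ 1 := by
    rw [hbb]
    intro hcon
    have := congrArg Multiplicative.toAdd hcon
    simp at this
  -- the projection to the free product
  have hrelcheck : ∀ r ∈ dihedralRels (2 * k),
      FreeGroup.lift (![ofZ k aa, (ofZ k aa)⁻¹ * ofZM k bb] : Fin 2 → QE k) r = 1 := by
    intro r hr
    rw [dihedralRels, Set.mem_singleton_iff] at hr
    subst hr
    rw [map_mul, map_inv, map_altWord, map_altWord, FreeGroup.lift_apply_of, FreeGroup.lift_apply_of]
    simp only [Matrix.cons_val_zero, Matrix.cons_val_one, Matrix.head_cons]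
    rw [altWord_even, altWord_even]
    have e1 : (ofZ k aa * ((ofZ k aa)⁻¹ * ofZM k bb)) = ofZM k bb := by group
    have e2 : ((ofZ k aa)⁻¹ * ofZM k bb * ofZ k aa) ^ k
        = (ofZ k aa)⁻¹ * (ofZM k bb) ^ k * ofZ k aa := by
      have h3 := conj_pow (a := (ofZ k aa)⁻¹) (b := ofZM k bb) (i := k)
      rwa [inv_inv] at h3
    rw [e1, e2, ← map_pow, hbbk, map_one]
    group
  set π := PresentedGroup.toGroup hrelcheck with hπ
  have hπ0 : π (PresentedGroup.of 0) = ofZ k aa := by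
    rw [hπ]
    rw [PresentedGroup.toGroup.of]
    simp
  have hπ1 : π (PresentedGroup.of 1) = (ofZ k aa)⁻¹ * ofZM k bb := by
    rw [hπ]
    rw [PresentedGroup.toGroup.of]
    simp
  -- the section
  have hδz : δ z = 1 := (QuotientGroup.eq_one_iff z).mpr (Subgroup.mem_zpowers z)
  have hδab : (δ (a * b)) ^ k = 1 := by
    rw [← map_pow, ← hz, hδz]
  set ψA := zpowersHom _ (δ a) with hψA
  set ψB := zmodMulHom k (δ (a * b)) hδab with hψB
  set ψ := Monoid.CoprodI.lift (famHom ψA ψB) with hψ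
  have hψZ : ∀ u, ψ (ofZ k u) = ψA u := fun u => Monoid.CoprodI.lift_of _ _
  have hψZM : ∀ u, ψ (ofZM k u) = ψB u := fun u => Monoid.CoprodI.lift_of _ _
  have hsec : ∀ w, ψ (π w) = δ w := by
    have hhom : ψ.comp π = (δ : PresentedGroup (dihedralRels (2 * k)) →* _) := by
      apply PresentedGroup.ext
      intro x'
      fin_cases x'
      · show ψ (π (PresentedGroup.of 0)) = δ (PresentedGroup.of 0)
        rw [hπ0, hψZ, hψA, zpowersHom_apply, haa]
        simp
        rfl
      · show ψ (π (PresentedGroup.of 1)) = δ (PresentedGroup.of 1)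
        rw [hπ1, map_mul, map_inv, hψZ, hψZM]
        have h4 : ψB bb = δ (a * b) := by
          rw [hψB, hbb, show ((1 : ZMod k)) = (((1 : ℕ) : ZMod k)) by simp,
            zmodMulHom_natCast, pow_one]
        rw [h4, hψA, zpowersHom_apply, haa]
        simp only [toAdd_ofAdd, zpow_one]
        rw [← map_inv, ← map_mul]
        congr 1
        group
        rfl
    intro w
    exact DFunLike.congr_fun hhom w
  have hker : ∀ w, π w = 1 → w ∈ Subgroup.zpowers z := by
    intro w hw
    have h5 : δ w = 1 := by rw [← hsec w, hw, map_one]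
    exact (QuotientGroup.eq_one_iff w).mp h5
  -- theta of z
  have hθa : theta (2 * k) a = Multiplicative.ofAdd (1 : ℤ) := theta_of _ 0
  have hθb : theta (2 * k) b = Multiplicative.ofAdd (1 : ℤ) := theta_of _ 1
  have hθz : theta (2 * k) z = Multiplicative.ofAdd ((2 * k : ℕ) : ℤ) := by
    rw [hz, map_pow, map_mul, hθa, hθb, ← ofAdd_add, ← ofAdd_nsmul]
    congr 1
    push_cast
    ring
  -- transported commutativity
  have hc' : Commute (π g * π (PresentedGroup.of x) * (π g)⁻¹)
      (π h * π (PresentedGroup.of y) * (π h)⁻¹) := by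
    have h6 := hcomm.map π
    simpa [map_mul, map_inv] using h6
  -- main case analysis
  refine assembly (2 * k) π z ((2 * k : ℕ) : ℤ) hker hθz (by push_cast; omega) g h x y ?_
  have hmapu : ∀ (g' : PresentedGroup (dihedralRels (2 * k))) (x' : Fin 2),
      π (g' * PresentedGroup.of x' * g'⁻¹) = π g' * π (PresentedGroup.of x') * (π g')⁻¹ := by
    intro g' x'
    rw [map_mul, map_mul, map_inv]
  fin_cases x <;> fin_cases y <;>
    simp only [Fin.zero_eta, Fin.mk_one, Fin.isValue] at hc' ⊢
  · -- elliptic, elliptic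
    refine ⟨1, Or.inl rfl, ?_⟩
    rw [zpow_one, hmapu, hmapu, hπ0]
    exact QEE haane (π g) (π h) (by rw [hπ0] at hc'; exact hc')
  · -- elliptic, hyperbolic : impossible
    exfalso
    have hrw : ((ofZ k aa)⁻¹ : QE k) = ofZ k (aa⁻¹) := (map_inv _ _).symm
    rw [hπ0, hπ1, hrw] at hc'
    exact QEH bool_two' (by decide) haane haaine hbbne (π g) (π h) hc'
  · -- hyperbolic, elliptic : impossible
    exfalso
    have hrw : ((ofZ k aa)⁻¹ : QE k) = ofZ k (aa⁻¹) := (map_inv _ _).symm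
    rw [hπ0, hπ1, hrw] at hc'
    exact QEH bool_two' (by decide) haane haaine hbbne (π h) (π g) hc'.symm
  · -- hyperbolic, hyperbolic
    have hrw : ((ofZ k aa)⁻¹ : QE k) = ofZ k (aa⁻¹) := (map_inv _ _).symm
    rw [hπ1, hrw] at hc'
    obtain ⟨n, hn1, hn2⟩ := QHH bool_two' (by decide) (by decide) haaine hbbne haaine hbbne
      (π g) (π h) hc'
    refine ⟨n, hn1, ?_⟩
    rw [hmapu, hmapu, hπ1, hrw]
    exact hn2

/-! ### the odd case : `m = 2s+1`, quotient is `C₂ * C_m` -/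

abbrev QO (s : ℕ) : Type :=
  Monoid.CoprodI (fam (Multiplicative (ZMod 2)) (Multiplicative (ZMod (2 * s + 1))))

def ofX (s : ℕ) : Multiplicative (ZMod 2) →* QO s :=
  @Monoid.CoprodI.of Bool (fam (Multiplicative (ZMod 2)) (Multiplicative (ZMod (2 * s + 1))))
    (fun _ => Group.toDivInvMonoid.toMonoid) false

def ofY (s : ℕ) : Multiplicative (ZMod (2 * s + 1)) →* QO s :=
  @Monoid.CoprodI.of Bool (fam (Multiplicative (ZMod 2)) (Multiplicative (ZMod (2 * s + 1))))
    (fun _ => Group.toDivInvMonoid.toMonoid) true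

def yO (s c : ℕ) : Multiplicative (ZMod (2 * s + 1)) :=
  Multiplicative.ofAdd ((c : ℕ) : ZMod (2 * s + 1))

lemma yO_mul (s c d : ℕ) : yO s c * yO s d = yO s (c + d) := by
  rw [yO, yO, yO, ← ofAdd_add]
  congr 1
  push_cast
  ring

lemma yO_pow (s c n : ℕ) : (yO s c) ^ n = yO s (n * c) := by
  rw [yO, yO, ← ofAdd_nsmul]
  congr 1
  push_cast [nsmul_eq_mul]
  ring

lemma yO_full (s : ℕ) : yO s (2 * s + 1) = 1 := by
  rw [yO]
  have h0 : ((2 * s + 1 : ℕ) : ZMod (2 * s + 1)) = 0 := ZMod.natCast_self _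
  rw [h0, ofAdd_zero]

lemma yO_reduce (s c : ℕ) : yO s (c + (2 * s + 1)) = yO s c := by
  rw [← yO_mul, yO_full, mul_one]

lemma yO_ne_one (s c : ℕ) (h1 : 0 < c) (h2 : c < 2 * s + 1) : yO s c ≠ 1 := by
  rw [yO]
  intro hcon
  have h3 : ((c : ℕ) : ZMod (2 * s + 1)) = 0 := by
    have := congrArg Multiplicative.toAdd hcon
    simpa using this
  haveI : NeZero (2 * s + 1) := ⟨by omega⟩
  rw [ZMod.natCast_eq_zero_iff] at h3
  have := Nat.le_of_dvd h1 h3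
  omega

lemma odd_case (s : ℕ) (hs : 1 ≤ s) (g h : PresentedGroup (dihedralRels (2 * s + 1)))
    (x y : Fin 2)
    (hcomm : Commute (g * PresentedGroup.of x * g⁻¹) (h * PresentedGroup.of y * h⁻¹)) :
    g * PresentedGroup.of x * g⁻¹ = h * PresentedGroup.of y * h⁻¹ := by
  haveI : NeZero (2 * s + 1) := ⟨by omega⟩
  set a : PresentedGroup (dihedralRels (2 * s + 1)) := PresentedGroup.of 0 with ha
  set b : PresentedGroup (dihedralRels (2 * s + 1)) := PresentedGroup.of 1 with hb
  set Δ : PresentedGroup (dihedralRels (2 * s + 1)) := (a * b) ^ s * a with hΔ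
  have hrel : Δ = (b * a) ^ s * b := by
    have h1 := grel (2 * s + 1)
    rw [altWord_odd, altWord_odd] at h1
    exact h1
  have hΔa : Δ * a = b * Δ := by
    nth_rewrite 1 [hrel]
    rw [hΔ]
    calc (b * a) ^ s * b * a = (b * a) ^ (s + 1) := by rw [mul_assoc, ← pow_succ]
      _ = (b * a) * (b * a) ^ s := pow_succ' _ _
      _ = b * (a * (b * a) ^ s) := by rw [mul_assoc]
      _ = b * ((a * b) ^ s * a) := by rw [← pow_swap]
  have hΔb : Δ * b = a * Δ := by
    nth_rewrite 2 [hrel]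
    rw [hΔ]
    calc (a * b) ^ s * a * b = (a * b) ^ (s + 1) := by rw [mul_assoc, ← pow_succ]
      _ = (a * b) * (a * b) ^ s := pow_succ' _ _
      _ = a * (b * (a * b) ^ s) := by rw [mul_assoc]
      _ = a * ((b * a) ^ s * b) := by rw [← pow_swap]
  clear_value Δ
  set z : PresentedGroup (dihedralRels (2 * s + 1)) := Δ * Δ with hz
  clear_value z
  have hcomm_za : z * a = a * z := by
    rw [hz]
    calc Δ * Δ * a = Δ * (Δ * a) := by simp [mul_assoc]
      _ = Δ * (b * Δ) := by rw [hΔa]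
      _ = (Δ * b) * Δ := by simp [mul_assoc]
      _ = (a * Δ) * Δ := by rw [hΔb]
      _ = a * (Δ * Δ) := by simp [mul_assoc]
  have hcomm_zb : z * b = b * z := by
    rw [hz]
    calc Δ * Δ * b = Δ * (Δ * b) := by simp [mul_assoc]
      _ = Δ * (a * Δ) := by rw [hΔb]
      _ = (Δ * a) * Δ := by simp [mul_assoc]
      _ = (b * Δ) * Δ := by rw [hΔa]
      _ = b * (Δ * Δ) := by simp [mul_assoc]
  have hΔpow : ∀ t : ℕ, Δ * (a * b) ^ t = (b * a) ^ t * Δ := by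
    intro t
    induction t with
    | zero => simp
    | succ t ih =>
        calc Δ * (a * b) ^ (t + 1)
            = (Δ * a) * (b * (a * b) ^ t) := by rw [pow_succ']; simp [mul_assoc]
          _ = (b * Δ) * (b * (a * b) ^ t) := by rw [hΔa]
          _ = (b * (Δ * b)) * (a * b) ^ t := by simp [mul_assoc]
          _ = (b * (a * Δ)) * (a * b) ^ t := by rw [hΔb]
          _ = (b * a) * (Δ * (a * b) ^ t) := by simp [mul_assoc]
          _ = (b * a) * ((b * a) ^ t * Δ) := by rw [ih]
          _ = (b * a) ^ (t + 1) * Δ := by rw [pow_succ']; simp [mul_assoc]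
  have hzab : z = (a * b) ^ (2 * s + 1) := by
    rw [hz]
    nth_rewrite 2 [hrel]
    nth_rewrite 1 [hΔ]
    calc (a * b) ^ s * a * ((b * a) ^ s * b)
        = (a * b) ^ s * ((a * (b * a) ^ s) * b) := by simp [mul_assoc]
      _ = (a * b) ^ s * (((a * b) ^ s * a) * b) := by rw [← pow_swap]
      _ = (a * b) ^ s * (a * b) ^ s * (a * b) := by simp [mul_assoc]
      _ = (a * b) ^ (2 * s + 1) := by
          rw [← pow_add, ← pow_succ]
          congr 1
          omega
  have hcent : ∀ w : PresentedGroup (dihedralRels (2 * s + 1)), z * w = w * z := by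
    intro w
    have hmem := PresentedGroup.generated_by (dihedralRels (2 * s + 1))
      (Subgroup.centralizer {z}) (by
        intro j
        rw [Subgroup.mem_centralizer_iff]
        intro h' hh'
        rw [Set.mem_singleton_iff] at hh'
        subst hh'
        fin_cases j
        · exact hcomm_za
        · exact hcomm_zb) w
    rw [Subgroup.mem_centralizer_iff] at hmem
    exact hmem z rfl
  have hnormal : (Subgroup.zpowers z).Normal := by
    constructor
    intro x' hx' g'
    obtain ⟨n, hn⟩ := Subgroup.mem_zpowers_iff.mp hx'
    have hcz : Commute z g' := hcent g'
    have hfix : g' * x' * g'⁻¹ = x' := by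
      rw [← hn]
      have h2 : g' * z ^ n = z ^ n * g' := ((hcz.zpow_left n).eq).symm
      calc g' * z ^ n * g'⁻¹ = z ^ n * g' * g'⁻¹ := by rw [h2]
        _ = z ^ n := by group
    rw [hfix]
    exact hx'
  haveI := hnormal
  set δ := QuotientGroup.mk' (Subgroup.zpowers z) with hδ
  -- letters
  set xx : Multiplicative (ZMod 2) := Multiplicative.ofAdd (1 : ZMod 2) with hxx
  have hXX : ofX s xx * ofX s xx = 1 := by
    rw [← map_mul]
    have h3 : xx * xx = 1 := by rw [hxx]; decide
    rw [h3, map_one]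
  have hXinv : (ofX s xx)⁻¹ = ofX s xx := by
    have h3 : xx⁻¹ = xx := by decide
    rw [← map_inv, h3]
  have hxxne : xx ≠ 1 := by rw [hxx]; decide
  have hyne : yO s (s + 1) ≠ 1 := yO_ne_one s (s + 1) (by omega) (by omega)
  have hYmul : ∀ c d : ℕ, ofY s (yO s c) * ofY s (yO s d) = ofY s (yO s (c + d)) := by
    intro c d; rw [← map_mul, yO_mul]
  have hYpow : ∀ (c n : ℕ), (ofY s (yO s c)) ^ n = ofY s (yO s (n * c)) := by
    intro c n; rw [← map_pow, yO_pow]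
  have hYfull : ofY s (yO s (2 * s + 1)) = 1 := by rw [yO_full, map_one]
  -- the projection
  have e1 : (ofY s (yO s (s + 1)) * ofX s xx) * (ofX s xx * ofY s (yO s (s + 1)))
      = ofY s (yO s 1) := by
    calc (ofY s (yO s (s + 1)) * ofX s xx) * (ofX s xx * ofY s (yO s (s + 1)))
        = ofY s (yO s (s + 1)) * (ofX s xx * ofX s xx) * ofY s (yO s (s + 1)) := by
          simp [mul_assoc]
      _ = ofY s (yO s (s + 1)) * ofY s (yO s (s + 1)) := by rw [hXX, mul_one]
      _ = ofY s (yO s ((s + 1) + (s + 1))) := hYmul _ _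
      _ = ofY s (yO s 1) := by
          have h9 : (s + 1) + (s + 1) = 1 + (2 * s + 1) := by omega
          rw [h9, yO_reduce]
  have e2 : altWord (ofY s (yO s (s + 1)) * ofX s xx) (ofX s xx * ofY s (yO s (s + 1)))
      (2 * s + 1) = ofX s xx := by
    rw [altWord_odd, e1, hYpow]
    calc ofY s (yO s (s * 1)) * (ofY s (yO s (s + 1)) * ofX s xx)
        = (ofY s (yO s (s * 1)) * ofY s (yO s (s + 1))) * ofX s xx := by rw [mul_assoc]
      _ = ofY s (yO s (s * 1 + (s + 1))) * ofX s xx := by rw [hYmul]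
      _ = ofX s xx := by
          have h9 : s * 1 + (s + 1) = 2 * s + 1 := by omega
          rw [h9, hYfull, one_mul]
  have e3 : (ofX s xx * ofY s (yO s (s + 1))) * (ofY s (yO s (s + 1)) * ofX s xx)
      = ofX s xx * ofY s (yO s 1) * ofX s xx := by
    calc (ofX s xx * ofY s (yO s (s + 1))) * (ofY s (yO s (s + 1)) * ofX s xx)
        = ofX s xx * (ofY s (yO s (s + 1)) * ofY s (yO s (s + 1))) * ofX s xx := by
          simp [mul_assoc]
      _ = ofX s xx * ofY s (yO s ((s + 1) + (s + 1))) * ofX s xx := by rw [hYmul]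
      _ = ofX s xx * ofY s (yO s 1) * ofX s xx := by
          have h9 : (s + 1) + (s + 1) = 1 + (2 * s + 1) := by omega
          rw [h9, yO_reduce]
  have e4 : altWord (ofX s xx * ofY s (yO s (s + 1))) (ofY s (yO s (s + 1)) * ofX s xx)
      (2 * s + 1) = ofX s xx := by
    rw [altWord_odd, e3]
    have h10 : (ofX s xx * ofY s (yO s 1) * ofX s xx) ^ s
        = ofX s xx * (ofY s (yO s 1)) ^ s * ofX s xx := by
      have h11 := conj_pow (a := ofX s xx) (b := ofY s (yO s 1)) (i := s)
      rw [hXinv] at h11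
      exact h11
    rw [h10, hYpow]
    calc ofX s xx * ofY s (yO s (s * 1)) * ofX s xx * (ofX s xx * ofY s (yO s (s + 1)))
        = ofX s xx * ofY s (yO s (s * 1)) * (ofX s xx * ofX s xx) * ofY s (yO s (s + 1)) := by
          simp [mul_assoc]
      _ = ofX s xx * (ofY s (yO s (s * 1)) * ofY s (yO s (s + 1))) := by
          rw [hXX, mul_one]; simp [mul_assoc]
      _ = ofX s xx * ofY s (yO s (s * 1 + (s + 1))) := by rw [hYmul]
      _ = ofX s xx := by
          have h9 : s * 1 + (s + 1) = 2 * s + 1 := by omega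
          rw [h9, hYfull, mul_one]
  have hrelcheck : ∀ r ∈ dihedralRels (2 * s + 1),
      FreeGroup.lift (![ofY s (yO s (s + 1)) * ofX s xx,
        ofX s xx * ofY s (yO s (s + 1))] : Fin 2 → QO s) r = 1 := by
    intro r hr
    rw [dihedralRels, Set.mem_singleton_iff] at hr
    subst hr
    rw [map_mul, map_inv, map_altWord, map_altWord, FreeGroup.lift_apply_of, FreeGroup.lift_apply_of]
    simp only [Matrix.cons_val_zero, Matrix.cons_val_one, Matrix.head_cons]
    rw [e2, e4, mul_inv_cancel]
  set π := PresentedGroup.toGroup hrelcheck with hπ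
  have hπ0 : π (PresentedGroup.of 0) = ofY s (yO s (s + 1)) * ofX s xx := by
    rw [hπ, PresentedGroup.toGroup.of]
    simp
  have hπ1 : π (PresentedGroup.of 1) = ofX s xx * ofY s (yO s (s + 1)) := by
    rw [hπ, PresentedGroup.toGroup.of]
    simp
  -- the section
  have hδz : δ z = 1 := (QuotientGroup.eq_one_iff z).mpr (Subgroup.mem_zpowers z)
  have hδΔ2 : (δ Δ) ^ 2 = 1 := by
    rw [pow_two, ← map_mul, ← hz, hδz]
  have hδab : (δ (a * b)) ^ (2 * s + 1) = 1 := by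
    rw [← map_pow, ← hzab, hδz]
  set ψX := zmodMulHom 2 (δ Δ) hδΔ2 with hψX
  set ψY := zmodMulHom (2 * s + 1) (δ (a * b)) hδab with hψY
  set ψ := Monoid.CoprodI.lift (famHom ψX ψY) with hψ
  have hψX' : ∀ u, ψ (ofX s u) = ψX u := fun u => Monoid.CoprodI.lift_of _ _
  have hψY' : ∀ u, ψ (ofY s u) = ψY u := fun u => Monoid.CoprodI.lift_of _ _
  have hψXxx : ψ (ofX s xx) = δ Δ := by
    rw [hψX', hψX, hxx, show ((1 : ZMod 2)) = (((1 : ℕ) : ZMod 2)) by simp,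
      zmodMulHom_natCast, pow_one]
  have hψYc : ∀ c : ℕ, ψ (ofY s (yO s c)) = (δ (a * b)) ^ c := by
    intro c
    rw [hψY', hψY, yO, zmodMulHom_natCast]
  -- group identities for the section check
  have key0 : (a * b) ^ (s + 1) * Δ = a * z := by
    calc (a * b) ^ (s + 1) * Δ = (a * b) ^ s * (a * (b * Δ)) := by
          rw [pow_succ]; simp [mul_assoc]
      _ = (a * b) ^ s * (a * (Δ * a)) := by rw [← hΔa]
      _ = ((a * b) ^ s * a) * Δ * a := by simp [mul_assoc]
      _ = Δ * Δ * a := by rw [← hΔ]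
      _ = z * a := by rw [← hz]
      _ = a * z := hcomm_za
  have key1 : Δ * (a * b) ^ (s + 1) = b * z := by
    rw [hΔpow (s + 1), hz]
    calc (b * a) ^ (s + 1) * Δ = ((b * a) ^ s * b) * (a * Δ) := by
          rw [pow_succ]; simp [mul_assoc]
      _ = (b * (a * b) ^ s) * (a * Δ) := by rw [pow_swap]
      _ = b * (((a * b) ^ s * a) * Δ) := by simp [mul_assoc]
      _ = b * (Δ * Δ) := by rw [← hΔ]
  have hsec : ∀ w, ψ (π w) = δ w := by
    have hhom : ψ.comp π = (δ : PresentedGroup (dihedralRels (2 * s + 1)) →* _) := by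
      apply PresentedGroup.ext
      intro x'
      fin_cases x'
      · show ψ (π (PresentedGroup.of 0)) = δ (PresentedGroup.of 0)
        rw [hπ0, map_mul, hψXxx, hψYc, ← map_pow, ← map_mul]
        have h12 : (a * b) ^ (s + 1) * Δ = a * z := key0
        rw [h12, map_mul, hδz, mul_one]
      · show ψ (π (PresentedGroup.of 1)) = δ (PresentedGroup.of 1)
        rw [hπ1, map_mul, hψXxx, hψYc, ← map_pow, ← map_mul]
        have h12 : Δ * (a * b) ^ (s + 1) = b * z := key1
        rw [h12, map_mul, hδz, mul_one]
    intro w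
    exact DFunLike.congr_fun hhom w
  have hker : ∀ w, π w = 1 → w ∈ Subgroup.zpowers z := by
    intro w hw
    have h5 : δ w = 1 := by rw [← hsec w, hw, map_one]
    exact (QuotientGroup.eq_one_iff w).mp h5
  -- theta of z
  have hθa : theta (2 * s + 1) a = Multiplicative.ofAdd (1 : ℤ) := theta_of _ 0
  have hθb : theta (2 * s + 1) b = Multiplicative.ofAdd (1 : ℤ) := theta_of _ 1
  have hθz : theta (2 * s + 1) z = Multiplicative.ofAdd ((2 * (2 * s + 1) : ℕ) : ℤ) := by
    rw [hzab, map_pow, map_mul, hθa, hθb, ← ofAdd_add, ← ofAdd_nsmul]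
    congr 1
    push_cast
    ring
  have hc' : Commute (π g * π (PresentedGroup.of x) * (π g)⁻¹)
      (π h * π (PresentedGroup.of y) * (π h)⁻¹) := by
    have h6 := hcomm.map π
    simpa [map_mul, map_inv] using h6
  refine assembly (2 * s + 1) π z ((2 * (2 * s + 1) : ℕ) : ℤ) hker hθz (by push_cast; omega)
    g h x y ?_
  have hmapu : ∀ (g' : PresentedGroup (dihedralRels (2 * s + 1))) (x' : Fin 2),
      π (g' * PresentedGroup.of x' * g'⁻¹) = π g' * π (PresentedGroup.of x') * (π g')⁻¹ := by
    intro g' x'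
    rw [map_mul, map_mul, map_inv]
  fin_cases x <;> fin_cases y <;>
    simp only [Fin.zero_eta, Fin.mk_one, Fin.isValue] at hc' ⊢
  · rw [hπ0] at hc'
    obtain ⟨n, hn1, hn2⟩ := QHH bool_two (by decide) (by decide) hyne hxxne hyne hxxne
      (π g) (π h) hc'
    exact ⟨n, hn1, by rw [hmapu, hmapu, hπ0]; exact hn2⟩
  · rw [hπ0, hπ1] at hc'
    obtain ⟨n, hn1, hn2⟩ := QHH bool_two (by decide) (by decide) hyne hxxne hxxne hyne
      (π g) (π h) hc'
    exact ⟨n, hn1, by rw [hmapu, hmapu, hπ0, hπ1]; exact hn2⟩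
  · rw [hπ0, hπ1] at hc'
    obtain ⟨n, hn1, hn2⟩ := QHH bool_two' (by decide) (by decide) hxxne hyne hyne hxxne
      (π g) (π h) hc'
    exact ⟨n, hn1, by rw [hmapu, hmapu, hπ0, hπ1]; exact hn2⟩
  · rw [hπ1] at hc'
    obtain ⟨n, hn1, hn2⟩ := QHH bool_two' (by decide) (by decide) hxxne hyne hxxne hyne
      (π g) (π h) hc'
    exact ⟨n, hn1, by rw [hmapu, hmapu, hπ1]; exact hn2⟩
end DihedralAux

/-- In a dihedral Artin group `A_{ab}` with `m ≥ 3`, if two conjugates of standard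
generators commute then they are equal; equivalently, two distinct conjugates of
standard generators never generate a subgroup isomorphic to `ℤ²`. -/
theorem dihedral_commuting_conjugates_of_generators_eq
    (m : ℕ) (hm : 3 ≤ m)
    (g h : PresentedGroup (dihedralRels m)) (x y : Fin 2)
    (hcomm : Commute (g * PresentedGroup.of x * g⁻¹) (h * PresentedGroup.of y * h⁻¹)) :
    g * PresentedGroup.of x * g⁻¹ = h * PresentedGroup.of y * h⁻¹ := by
  rcases Nat.even_or_odd m with he | ho
  · obtain ⟨k, hk⟩ := he
    have hk2 : m = 2 * k := by omega
    subst hk2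
    exact DihedralAux.even_case k (by omega) g h x y hcomm
  · obtain ⟨s, hs⟩ := ho
    subst hs
    exact DihedralAux.odd_case s (by omega) g h x y hcomm
end

section
/- Let 1 → ℤ →ι G →π F → 1 be a central extension of groups whose corresponding cohomology class in H²(F, ℤ) is bounded, meaning there is a set-theoretic section s : F → G of π such that {s(f₁)s(f₂)s(f₁f₂)⁻¹ : f₁, f₂ ∈ F} is a finite set. Then there exists a quasimorphism φ : G → ℤ (i.e. a function with |φ(xy) − φ(x) − φ(y)| uniformly bounded) which is unbounded on ι(ℤ); in fact φ(ι(t)) = t for all t ∈ ℤ. -/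
/-- Let `1 → ℤ →ι G →π F → 1` be a central extension corresponding to a bounded class in
`H²(F, ℤ)`, i.e. admitting a set-theoretic section `s` of `π` such that
`{s f₁ * s f₂ * (s (f₁ f₂))⁻¹}` is a finite set.  Then there is a quasimorphism
`φ : G → ℤ` (uniformly bounded defect) with `φ (ι t) = t` for all `t`; in particular `φ`
is unbounded on `ι(ℤ)`. -/
theorem exists_quasimorphism_of_bounded_central_extension
    {G F : Type*} [Group G] [Group F]
    (ι : Multiplicative ℤ →* G) (π : G →* F)
    (hinj : Function.Injective ι) (hsurj : Function.Surjective π)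
    (hcentral : ∀ (t : Multiplicative ℤ) (g : G), ι t * g = g * ι t)
    (hker : ∀ g : G, π g = 1 ↔ g ∈ Set.range ι)
    (s : F → G) (hs : ∀ f : F, π (s f) = f)
    (hbdd : Set.Finite { g : G | ∃ f₁ f₂ : F, g = s f₁ * s f₂ * (s (f₁ * f₂))⁻¹ }) :
    ∃ φ : G → ℤ,
      (∃ C : ℤ, ∀ x y : G, |φ (x * y) - φ x - φ y| ≤ C) ∧
      ∀ t : ℤ, φ (ι (Multiplicative.ofAdd t)) = t := by
  classical
  have key : ∀ x : G, ∃ t : ℤ, ι (Multiplicative.ofAdd t) = x * (s (π x))⁻¹ := by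
    intro x
    have h1 : π (x * (s (π x))⁻¹) = 1 := by simp [hs]
    obtain ⟨t, ht⟩ := (hker _).mp h1
    exact ⟨Multiplicative.toAdd t, by simpa using ht⟩
  choose ψ hψ using key
  have hdecomp : ∀ x : G, x = ι (Multiplicative.ofAdd (ψ x)) * s (π x) := by
    intro x; rw [hψ]; group
  have huniq : ∀ (x : G) (t : ℤ), x = ι (Multiplicative.ofAdd t) * s (π x) → ψ x = t := by
    intro x t h
    have h2 : ι (Multiplicative.ofAdd (ψ x)) = ι (Multiplicative.ofAdd t) := by
      rw [hψ x]
      calc x * (s (π x))⁻¹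
          = ι (Multiplicative.ofAdd t) * s (π x) * (s (π x))⁻¹ := by rw [← h]
        _ = ι (Multiplicative.ofAdd t) := by group
    exact Multiplicative.ofAdd.injective (hinj h2)
  obtain ⟨e, he⟩ : ∃ e : ℤ, ι (Multiplicative.ofAdd e) = s 1 := by
    have h1 : π (s 1) = 1 := hs 1
    obtain ⟨t, ht⟩ := (hker _).mp h1
    exact ⟨Multiplicative.toAdd t, by simpa using ht⟩
  -- the set of integers appearing as cocycle values
  set S := { g : G | ∃ f₁ f₂ : F, g = s f₁ * s f₂ * (s (f₁ * f₂))⁻¹ } with hS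
  set D := { t : ℤ | ι (Multiplicative.ofAdd t) ∈ S } with hD
  have hDfin : D.Finite := by
    have : Set.InjOn (fun t : ℤ => ι (Multiplicative.ofAdd t)) D := fun a _ b _ h =>
      Multiplicative.ofAdd.injective (hinj h)
    exact Set.Finite.of_finite_image (hbdd.subset (by rintro g ⟨t, ht, rfl⟩; exact ht)) this
  obtain ⟨C, hC⟩ : ∃ C : ℤ, ∀ t ∈ D, |t| ≤ C := by
    obtain ⟨C, hC⟩ := (hDfin.image abs).bddAbove
    exact ⟨C, fun t ht => hC ⟨t, ht, rfl⟩⟩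
  refine ⟨fun x => ψ x + e, ⟨C + |e|, ?_⟩, ?_⟩
  · intro x y
    -- cocycle element
    set c := s (π x) * s (π y) * (s (π x * π y))⁻¹ with hc
    have hcS : c ∈ S := ⟨π x, π y, rfl⟩
    have hcπ : π c = 1 := by simp only [hc, map_mul, map_inv, hs]; group
    obtain ⟨d, hd⟩ := (hker _).mp hcπ
    have hdD : Multiplicative.toAdd d ∈ D := by
      show ι (Multiplicative.ofAdd (Multiplicative.toAdd d)) ∈ S
      rw [ofAdd_toAdd, hd]; exact hcS
    have hxy : ψ (x * y) = ψ x + ψ y + Multiplicative.toAdd d := by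
      apply huniq
      have : ι (Multiplicative.ofAdd (ψ x + ψ y + Multiplicative.toAdd d))
          = ι (Multiplicative.ofAdd (ψ x)) * ι (Multiplicative.ofAdd (ψ y)) * ι d := by
        rw [← map_mul, ← map_mul]
        congr 1
      rw [map_mul, this, hd, hc]
      calc x * y = (ι (Multiplicative.ofAdd (ψ x)) * s (π x)) *
            (ι (Multiplicative.ofAdd (ψ y)) * s (π y)) := by
              rw [← hdecomp, ← hdecomp]
        _ = ι (Multiplicative.ofAdd (ψ x)) * (s (π x) * ι (Multiplicative.ofAdd (ψ y))) *
              s (π y) := by group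
        _ = ι (Multiplicative.ofAdd (ψ x)) * (ι (Multiplicative.ofAdd (ψ y)) * s (π x)) *
              s (π y) := by
              rw [← hcentral (Multiplicative.ofAdd (ψ y)) (s (π x))]
        _ = _ := by group
    have habs : |Multiplicative.toAdd d| ≤ C := hC _ hdD
    calc |ψ (x * y) + e - (ψ x + e) - (ψ y + e)|
        = |Multiplicative.toAdd d - e| := by rw [hxy]; ring_nf
      _ ≤ |Multiplicative.toAdd d| + |e| := abs_sub _ _
      _ ≤ C + |e| := by linarith
  · intro t
    have : ψ (ι (Multiplicative.ofAdd t)) = t - e := by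
      apply huniq
      have hπ : π (ι (Multiplicative.ofAdd t)) = 1 :=
        (hker _).mpr ⟨Multiplicative.ofAdd t, rfl⟩
      rw [hπ, ← he, ← map_mul]
      congr 1
      rw [← ofAdd_add]
      congr 1
      ring
    show ψ (ι (Multiplicative.ofAdd t)) + e = t
    rw [this]; ring
end

section
/- Let C₀ and C₁ be infinite cyclic groups and let Λ₀, Λ₁ be metric spaces quasi-isometric to ℤ (quasilines). Suppose C₀ × C₁ acts by isometries on both Λ₀ and Λ₁ such that the subgroup C_i acts with unbounded orbits on Λ_i and with orbits of diameter at most B on Λ_{1−i}, for i = 0, 1. Then the diagonal action of C₀ × C₁ on Λ₀ × Λ₁ with the ℓ¹ metric is metrically proper and cobounded. -/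
lemma ivt_discrete (g : ℤ → ℝ) (c : ℝ) (hc : 0 ≤ c)
    (hstep : ∀ p, |g (p+1) - g p| ≤ c) :
    ∀ (N : ℕ) (a : ℤ), 0 ≤ g a → g (a + N) ≤ 0 →
      ∃ p, a ≤ p ∧ p ≤ a + N ∧ |g p| ≤ c := by
  intro N
  induction N with
  | zero =>
    intro a ha hb
    refine ⟨a, le_refl _, by simp, ?_⟩
    have : g a = 0 := le_antisymm (by simpa using hb) ha
    simp [this, hc]
  | succ n ih =>
    intro a ha hb
    rcases le_or_gt (g (a+1)) 0 with h1 | h1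
    · refine ⟨a + 1, by omega, by push_cast; omega, ?_⟩
      have := hstep a
      rw [abs_le] at this ⊢
      constructor <;> nlinarith [this.1, this.2]
    · have hb' : g ((a+1) + n) ≤ 0 := by
        have : (a+1) + (n:ℤ) = a + ((n:ℕ)+1 : ℕ) := by push_cast; ring
        rw [this]; exact hb
      obtain ⟨p, hp1, hp2, hp3⟩ := ih (a+1) h1.le hb'
      exact ⟨p, by omega, by push_cast at hp2 ⊢; omega, hp3⟩

/-- Peak balancing at a global max: impossible if some gap has large variation. -/
lemma no_max (v : ℤ → ℝ) (q A A' : ℝ) (hq : 0 ≤ q) (hA : 0 ≤ A)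
    (hstep : ∀ p, |v (p+1) - v p| ≤ q)
    (hcomp : ∀ p₁ p₂ k, |v (p₁+k) - v p₁| ≤ A * |v (p₂+k) - v p₂| + A')
    (m₀ k : ℤ) (hk : 1 ≤ k) (hbig : A * (2*q) + A' < |v (m₀ + k) - v m₀|)
    (n₀ : ℤ) (hmax : ∀ m, v m ≤ v n₀) : False := by
  set φ : ℤ → ℝ := fun p => v (p + k) - v p with hφ
  have hstepφ : ∀ p, |φ (p+1) - φ p| ≤ 2 * q := by
    intro p
    have h1 := hstep (p + k)
    have h2 := hstep p
    have : φ (p+1) - φ p = (v (p + k + 1) - v (p + k)) - (v (p+1) - v p) := by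
      simp only [hφ]; ring_nf
    calc |φ (p+1) - φ p| = |(v (p + k + 1) - v (p + k)) - (v (p+1) - v p)| := by rw [this]
      _ ≤ |v (p + k + 1) - v (p + k)| + |v (p+1) - v p| := abs_sub _ _
      _ ≤ 2 * q := by linarith
  have ha : 0 ≤ φ (n₀ - k) := by
    have : n₀ - k + k = n₀ := by ring
    simp only [hφ, this]
    linarith [hmax (n₀ - k)]
  have hb : φ (n₀ - k + k.toNat) ≤ 0 := by
    have hk' : (k.toNat : ℤ) = k := Int.toNat_of_nonneg (by omega)
    rw [hk']
    have : n₀ - k + k = n₀ := by ring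
    simp only [hφ, this]
    linarith [hmax (n₀ + k)]
  obtain ⟨p, _, _, hp3⟩ := ivt_discrete φ (2*q) (by linarith) hstepφ k.toNat (n₀ - k) ha hb
  have := hcomp m₀ p k
  have h2 : A * |v (p + k) - v p| ≤ A * (2 * q) := by
    apply mul_le_mul_of_nonneg_left _ hA
    exact hp3
  linarith

/-- Peak balancing inside an interval. -/
lemma peak_bounded (v : ℤ → ℝ) (q A A' : ℝ) (hq : 0 ≤ q) (hA : 0 ≤ A)
    (hstep : ∀ p, |v (p+1) - v p| ≤ q)
    (hcomp : ∀ p₁ p₂ k, |v (p₁+k) - v p₁| ≤ A * |v (p₂+k) - v p₂| + A')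
    (s₀ s₁ nh : ℤ) (h0 : s₀ < nh) (h1 : nh < s₁) (M : ℝ)
    (hv0 : v s₀ ≤ M) (hv1 : v s₁ ≤ M)
    (hbig : M + (A * (2*q) + A') < v nh) : False := by
  obtain ⟨n, hn_mem, hn_max⟩ := Finset.exists_max_image (Finset.Icc s₀ s₁) v
    ⟨nh, Finset.mem_Icc.mpr ⟨h0.le, h1.le⟩⟩
  rw [Finset.mem_Icc] at hn_mem
  have hA' : 0 ≤ A' := by
    have := hcomp 0 0 0
    simp at this
    linarith
  have hAq : 0 ≤ A * (2*q) := by positivity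
  have hvn : M + (A * (2*q) + A') < v n := by
    have := hn_max nh (Finset.mem_Icc.mpr ⟨h0.le, h1.le⟩)
    linarith
  have hns0 : s₀ < n := by
    rcases lt_or_eq_of_le hn_mem.1 with h | h
    · exact h
    · exfalso; rw [← h] at hvn; linarith
  have hns1 : n < s₁ := by
    rcases lt_or_eq_of_le hn_mem.2 with h | h
    · exact h
    · exfalso; rw [h] at hvn; linarith
  set k : ℤ := min (n - s₀) (s₁ - n) with hk
  have hk1 : 1 ≤ k := by omega
  have hkl : k ≤ n - s₀ := min_le_left _ _
  have hkr : k ≤ s₁ - n := min_le_right _ _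
  set φ : ℤ → ℝ := fun p => v (p + k) - v p with hφ
  have hstepφ : ∀ p, |φ (p+1) - φ p| ≤ 2 * q := by
    intro p
    have h1 := hstep (p + k)
    have h2 := hstep p
    have heq : φ (p+1) - φ p = (v (p + k + 1) - v (p + k)) - (v (p+1) - v p) := by
      simp only [hφ]; ring_nf
    calc |φ (p+1) - φ p| = |(v (p + k + 1) - v (p + k)) - (v (p+1) - v p)| := by rw [heq]
      _ ≤ |v (p + k + 1) - v (p + k)| + |v (p+1) - v p| := abs_sub _ _
      _ ≤ 2 * q := by linarith
  have hmem : ∀ m, n - k ≤ m → m ≤ n + k → v m ≤ v n := by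
    intro m hm1 hm2
    exact hn_max m (Finset.mem_Icc.mpr ⟨by omega, by omega⟩)
  have ha : 0 ≤ φ (n - k) := by
    have h : n - k + k = n := by ring
    simp only [hφ, h]
    linarith [hmem (n - k) (by omega) (by omega)]
  have hb : φ (n - k + k.toNat) ≤ 0 := by
    have hk' : (k.toNat : ℤ) = k := Int.toNat_of_nonneg (by omega)
    rw [hk']
    have h : n - k + k = n := by ring
    simp only [hφ, h]
    linarith [hmem (n + k) (by omega) (by omega)]
  obtain ⟨p, _, _, hp3⟩ := ivt_discrete φ (2*q) (by linarith) hstepφ k.toNat (n - k) ha hb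
  have hApq : ∀ p₁, |v (p₁ + k) - v p₁| ≤ A * (2*q) + A' := by
    intro p₁
    have := hcomp p₁ p k
    have h2 : A * |v (p + k) - v p| ≤ A * (2 * q) := mul_le_mul_of_nonneg_left hp3 hA
    linarith
  rcases min_cases (n - s₀) (s₁ - n) with ⟨hmin, _⟩ | ⟨hmin, _⟩
  · have := hApq s₀
    rw [hk, hmin] at this
    have h : s₀ + (n - s₀) = n := by ring
    rw [h] at this
    have := abs_le.mp this
    linarith [this.1, this.2]
  · have := hApq n
    rw [hk, hmin] at this
    have h : n + (s₁ - n) = s₁ := by ring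
    rw [h] at this
    have := abs_le.mp this
    linarith [this.1, this.2]

lemma hit_between (u : ℤ → ℝ) (q : ℝ) (hq : 0 ≤ q)
    (hstep : ∀ p, |u (p+1) - u p| ≤ q) (t : ℝ) (a b : ℤ)
    (ha : u a ≤ t) (hb : t ≤ u b) : ∃ p, |u p - t| ≤ q := by
  rcases le_or_gt a b with hab | hab
  · set g : ℤ → ℝ := fun p => t - u p with hgdef
    have hg : ∀ p, |g (p+1) - g p| ≤ q := by
      intro p
      have h1 := hstep p
      have h3 : g (p+1) - g p = -(u (p+1) - u p) := by simp only [hgdef]; ring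
      rw [h3, abs_neg]
      exact h1
    have hga : 0 ≤ g a := by simp only [hgdef]; linarith
    have hN : a + ((b - a).toNat : ℤ) = b := by omega
    have hgb : g (a + ((b - a).toNat : ℤ)) ≤ 0 := by
      rw [hN]; simp only [hgdef]; linarith
    obtain ⟨p, _, _, hp⟩ := ivt_discrete g q hq hg (b - a).toNat a hga hgb
    refine ⟨p, ?_⟩
    rw [abs_sub_comm]
    simpa [hgdef] using hp
  · set g : ℤ → ℝ := fun p => t - u (a + b - p) with hgdef
    have hg : ∀ p, |g (p+1) - g p| ≤ q := by
      intro p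
      have h1 := hstep (a + b - p - 1)
      have h2 : a + b - p - 1 + 1 = a + b - p := by ring
      rw [h2] at h1
      have h1' : |u (a + b - p) - u (a + b - (p+1))| ≤ q := by
        rw [show a + b - (p+1) = a + b - p - 1 from by ring]
        exact h1
      have h3 : g (p+1) - g p = u (a + b - p) - u (a + b - (p+1)) := by
        simp only [hgdef]
        ring
      rw [h3]
      exact h1'
    have hga : 0 ≤ g b := by
      simp only [hgdef]; rw [show a + b - b = a by ring]; linarith
    have hN : b + ((a - b).toNat : ℤ) = a := by omega
    have hgb : g (b + ((a - b).toNat : ℤ)) ≤ 0 := by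
      rw [hN]; simp only [hgdef]; rw [show a + b - a = b by ring]; linarith
    obtain ⟨p, _, _, hp⟩ := ivt_discrete g q hq hg (a - b).toNat b hga hgb
    refine ⟨a + b - p, ?_⟩
    rw [abs_sub_comm]
    simpa [hgdef] using hp

lemma unbounded_above (w : ℤ → ℤ) (q A A' : ℝ) (hq : 0 ≤ q) (hA : 0 ≤ A)
    (hstep : ∀ p, |((w (p+1) : ℤ) : ℝ) - ((w p : ℤ) : ℝ)| ≤ q)
    (hcomp : ∀ p₁ p₂ k, |((w (p₁+k) : ℤ) : ℝ) - ((w p₁ : ℤ) : ℝ)| ≤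
      A * |((w (p₂+k) : ℤ) : ℝ) - ((w p₂ : ℤ) : ℝ)| + A')
    (m₀ k : ℤ) (hk : 1 ≤ k)
    (hbig : A * (2*q) + A' < |((w (m₀+k) : ℤ) : ℝ) - ((w m₀ : ℤ) : ℝ)|) :
    ∀ G : ℝ, ∃ m, G < ((w m : ℤ) : ℝ) := by
  intro G
  by_contra hcon
  push_neg at hcon
  have hbd : ∀ z : ℤ, (∃ m, w m = z) → z ≤ ⌈G⌉ := by
    rintro z ⟨m, rfl⟩
    exact_mod_cast (hcon m).trans (Int.le_ceil G)
  obtain ⟨z₀, ⟨n₀, hn₀⟩, hmax⟩ := Int.exists_greatest_of_bdd ⟨⌈G⌉, hbd⟩ ⟨w 0, 0, rfl⟩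
  exact no_max (fun m => ((w m : ℤ) : ℝ)) q A A' hq hA hstep hcomp m₀ k hk hbig n₀
    (fun m => by
      have h : w m ≤ w n₀ := hn₀ ▸ hmax (w m) ⟨m, rfl⟩
      show ((w m : ℤ) : ℝ) ≤ ((w n₀ : ℤ) : ℝ)
      exact_mod_cast h)

lemma quasiline_orbit {Λ : Type*} [MetricSpace Λ] (f : Λ → ℤ) (B : ℝ)
    (hf : ∀ x y : Λ, dist x y ≤ B * |(f x : ℝ) - (f y : ℝ)| + B ∧
        |(f x : ℝ) - (f y : ℝ)| ≤ B * dist x y + B)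
    (y : ℤ → Λ)
    (htr : ∀ m k : ℤ, dist (y (m + k)) (y m) = dist (y k) (y 0))
    (hu : ∀ R : ℝ, ∃ m : ℤ, R < dist (y m) (y 0)) :
    (∀ L : ℝ, {m : ℤ | dist (y m) (y 0) ≤ L}.Finite) ∧
    (∀ z : Λ, ∃ m : ℤ, dist (y m) z ≤ B * (B * dist (y 1) (y 0) + B) + B) := by
  have hB : 0 ≤ B := by
    have := (hf (y 0) (y 0)).2
    simp at this
    linarith
  have hBpos : 0 < B := by
    rcases hB.lt_or_eq with h | h
    · exact h
    · exfalso
      obtain ⟨m, hm⟩ := hu 0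
      have h1 := (hf (y m) (y 0)).1
      rw [← h] at h1
      simp only [zero_mul, zero_add] at h1
      linarith
  set w : ℤ → ℤ := fun m => f (y m) with hw
  set u : ℤ → ℝ := fun m => ((w m : ℤ) : ℝ) with hu'
  set d1 : ℝ := dist (y 1) (y 0) with hd1
  set q : ℝ := B * d1 + B with hqdef
  have hd1nn : 0 ≤ d1 := dist_nonneg
  have hq : 0 ≤ q := by positivity
  have hstep : ∀ p, |u (p+1) - u p| ≤ q := by
    intro p
    have h1 := (hf (y (p+1)) (y p)).2
    have h2 : dist (y (p+1)) (y p) = d1 := htr p 1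
    rw [h2] at h1
    exact h1
  set A : ℝ := B * B with hA'
  set A' : ℝ := B * B + B with hA''
  have hA : 0 ≤ A := by positivity
  have hcomp : ∀ p₁ p₂ k, |u (p₁+k) - u p₁| ≤ A * |u (p₂+k) - u p₂| + A' := by
    intro p₁ p₂ k
    have e1 := (hf (y (p₁+k)) (y p₁)).2
    have e2 := (hf (y (p₂+k)) (y p₂)).1
    have e3 : dist (y (p₁+k)) (y p₁) = dist (y (p₂+k)) (y p₂) := by
      rw [htr p₁ k, htr p₂ k]
    rw [e3] at e1
    have : |u (p₁+k) - u p₁| ≤ B * (B * |u (p₂+k) - u p₂| + B) + B := by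
      refine e1.trans ?_
      have := mul_le_mul_of_nonneg_left e2 hB
      linarith
    simp only [hA', hA'']
    nlinarith [abs_nonneg (u (p₂+k) - u p₂)]
  -- transfer of upper/lower bounds between dist and u
  have hdist_to_u : ∀ m n : ℤ, ∀ L : ℝ, dist (y m) (y n) ≤ L → |u m - u n| ≤ B * L + B := by
    intro m n L h
    have h1 := (hf (y m) (y n)).2
    have := mul_le_mul_of_nonneg_left h hB
    exact h1.trans (by linarith)
  have hu_to_dist : ∀ m n : ℤ, ∀ L : ℝ, B * L + B < dist (y m) (y n) → L < |u m - u n| := by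
    intro m n L h
    by_contra hcon
    push_neg at hcon
    have h1 := (hf (y m) (y n)).1
    have := mul_le_mul_of_nonneg_left hcon hB
    linarith
  have hdmn : ∀ m n : ℤ, dist (y m) (y n) = dist (y (m - n)) (y 0) := by
    intro m n
    have := htr n (m - n)
    rw [show n + (m - n) = m by ring] at this
    rw [this]
  constructor
  · -- properness
    intro L
    by_contra hinf
    set S : Set ℤ := {m : ℤ | dist (y m) (y 0) ≤ L} with hS
    have hSsym : ∀ s ∈ S, -s ∈ S := by
      intro s hs
      have : dist (y (-s)) (y 0) = dist (y s) (y 0) := by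
        have h1 := htr (-s) s
        rw [show -s + s = (0:ℤ) by ring] at h1
        rw [← h1, dist_comm]
      simpa [hS, this] using hs
    have hSup : ∀ N : ℤ, ∃ s ∈ S, N < s := by
      intro N
      by_contra hcon
      push_neg at hcon
      apply hinf
      apply (Set.finite_Icc (-N) N).subset
      intro s hs
      have h1 := hcon s hs
      have h2 := hcon (-s) (hSsym s hs)
      simp only [Set.mem_Icc]
      omega
    set L' : ℝ := B * L + B with hL'
    set C₃ : ℝ := A * (2*q) + A' with hC₃
    set H₁ : ℝ := L' + C₃ + 1 with hH₁
    obtain ⟨nst, hnst⟩ := hu (B * (H₁ + L') + B)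
    obtain ⟨s₀, hs₀S, _⟩ := hSup 0
    obtain ⟨s, hsS, hs⟩ := hSup (s₀ + |nst|)
    set nh : ℤ := s + nst with hnh
    have h0 : s₀ < nh := by
      have := neg_abs_le nst
      omega
    obtain ⟨s₁, hs₁S, h1⟩ := hSup nh
    have hus : |u s - u 0| ≤ L' := hdist_to_u s 0 L hsS
    have hus₀ : |u s₀ - u 0| ≤ L' := hdist_to_u s₀ 0 L hs₀S
    have hus₁ : |u s₁ - u 0| ≤ L' := hdist_to_u s₁ 0 L hs₁S
    have hdnh : dist (y nh) (y s) = dist (y nst) (y 0) := htr s nst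
    have hΔ : H₁ + L' < |u nh - u s| := by
      apply hu_to_dist
      rw [hdnh]
      exact hnst
    have hnhbig : H₁ < |u nh - u 0| := by
      have t1 : |u nh - u s| ≤ |u nh - u 0| + |u 0 - u s| := abs_sub_le _ _ _
      have t2 : |u 0 - u s| = |u s - u 0| := abs_sub_comm _ _
      linarith
    rcases lt_abs.mp hnhbig with hpos | hneg
    · refine peak_bounded u q A A' hq hA hstep hcomp s₀ s₁ nh h0 h1 (u 0 + L') ?_ ?_ ?_
      · linarith [(abs_le.mp hus₀).2]
      · linarith [(abs_le.mp hus₁).2]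
      · simp only [hH₁] at hpos ⊢
        linarith
    · refine peak_bounded (fun m => -(u m)) q A A' hq hA ?_ ?_ s₀ s₁ nh h0 h1 (-(u 0) + L') ?_ ?_ ?_
      · intro p
        rw [show -(u (p+1)) - -(u p) = -(u (p+1) - u p) by ring, abs_neg]
        exact hstep p
      · intro p₁ p₂ k
        rw [show -(u (p₁+k)) - -(u p₁) = -(u (p₁+k) - u p₁) by ring, abs_neg,
          show -(u (p₂+k)) - -(u p₂) = -(u (p₂+k) - u p₂) by ring, abs_neg]
        exact hcomp p₁ p₂ k
      · show -(u s₀) ≤ -(u 0) + L'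
        linarith [(abs_le.mp hus₀).1]
      · show -(u s₁) ≤ -(u 0) + L'
        linarith [(abs_le.mp hus₁).1]
      · show -(u 0) + L' + (A * (2*q) + A') < -(u nh)
        simp only [hH₁] at hneg
        linarith
  · -- coboundedness: orbit coarsely dense
    have hbigpair : ∃ m₀ k : ℤ, 1 ≤ k ∧ A * (2*q) + A' < |u (m₀ + k) - u m₀| := by
      obtain ⟨mst, hmst⟩ := hu (B * (A * (2*q) + A') + B)
      have hCnn : 0 ≤ A * (2*q) + A' := by
        simp only [hA', hA'']
        positivity
      have hne : mst ≠ 0 := by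
        intro hzero
        rw [hzero] at hmst
        simp at hmst
        nlinarith
      have habs : A * (2*q) + A' < |u mst - u 0| := hu_to_dist mst 0 _ hmst
      rcases hne.lt_or_gt with hlt | hgt
      · refine ⟨mst, -mst, by omega, ?_⟩
        rw [show mst + -mst = (0:ℤ) by ring, abs_sub_comm]
        exact habs
      · refine ⟨0, mst, by omega, ?_⟩
        rw [zero_add]
        exact habs
    obtain ⟨m₀, k, hk1, hbig⟩ := hbigpair
    have hub : ∀ G : ℝ, ∃ m, G < u m :=
      unbounded_above w q A A' hq hA hstep hcomp m₀ k hk1 hbig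
    have hlb : ∀ G : ℝ, ∃ m, u m < G := by
      intro G
      obtain ⟨m, hm⟩ := unbounded_above (fun m => -(w m)) q A A' hq hA
        (by
          intro p
          push_cast
          rw [show -(u (p+1)) - -(u p) = -(u (p+1) - u p) by ring, abs_neg]
          exact hstep p)
        (by
          intro p₁ p₂ kk
          push_cast
          rw [show -(u (p₁+kk)) - -(u p₁) = -(u (p₁+kk) - u p₁) by ring, abs_neg,
            show -(u (p₂+kk)) - -(u p₂) = -(u (p₂+kk) - u p₂) by ring, abs_neg]
          exact hcomp p₁ p₂ kk)
        m₀ k hk1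
        (by
          push_cast
          rw [show -(u (m₀+k)) - -(u m₀) = -(u (m₀+k) - u m₀) by ring, abs_neg]
          exact hbig)
        (-G)
      refine ⟨m, ?_⟩
      push_cast at hm
      linarith
    intro z
    set t : ℝ := ((f z : ℤ) : ℝ) with ht
    have hhit : ∃ p, |u p - t| ≤ q := by
      rcases le_or_gt (u 0) t with hle | hlt
      · obtain ⟨m₁, hm₁⟩ := hub t
        exact hit_between u q hq hstep t 0 m₁ hle hm₁.le
      · obtain ⟨m₁, hm₁⟩ := hlb t
        exact hit_between u q hq hstep t m₁ 0 hm₁.le hlt.le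
    obtain ⟨p, hp⟩ := hhit
    refine ⟨p, ?_⟩
    have h1 := (hf (y p) z).1
    have h2 := mul_le_mul_of_nonneg_left hp hB
    calc dist (y p) z ≤ B * |u p - t| + B := h1
      _ ≤ B * q + B := by linarith
      _ = B * (B * d1 + B) + B := by rw [hqdef]

lemma orbit_facts {G : Type*} [Group G] {Λ : Type*} [MetricSpace Λ] [MulAction G Λ]
    (hiso : ∀ (g : G) (x z : Λ), dist (g • x) (g • z) = dist x z)
    (f : Λ → ℤ) (B : ℝ)
    (hf : ∀ x z : Λ, dist x z ≤ B * |(f x : ℝ) - (f z : ℝ)| + B ∧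
        |(f x : ℝ) - (f z : ℝ)| ≤ B * dist x z + B)
    (a : G) (x : Λ)
    (hunb : ∀ R : ℝ, ∃ m : ℤ, R < dist ((a ^ m) • x) x) :
    (∀ L : ℝ, {m : ℤ | dist ((a ^ m) • x) x ≤ L}.Finite) ∧
    (∀ z : Λ, ∃ m : ℤ, dist ((a ^ m) • x) z ≤ B * (B * dist (a • x) x + B) + B) := by
  set y : ℤ → Λ := fun m => (a ^ m) • x with hy
  have hy0 : y 0 = x := by simp [hy]
  have hy1 : y 1 = a • x := by simp [hy]
  have htr : ∀ m k : ℤ, dist (y (m + k)) (y m) = dist (y k) (y 0) := by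
    intro m k
    have h1 : y (m + k) = (a ^ m) • y k := by
      simp only [hy, ← mul_smul, ← zpow_add, add_comm]
    have h2 : y m = (a ^ m) • y 0 := by simp [hy, hy0]
    rw [h1, h2, hiso]
  have hu : ∀ R : ℝ, ∃ m : ℤ, R < dist (y m) (y 0) := by
    intro R
    obtain ⟨m, hm⟩ := hunb R
    exact ⟨m, by rwa [hy0]⟩
  obtain ⟨h1, h2⟩ := quasiline_orbit f B hf y htr hu
  constructor
  · intro L
    have := h1 L
    simpa [hy0] using this
  · intro z
    obtain ⟨m, hm⟩ := h2 z
    rw [hy1, hy0] at hm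
    exact ⟨m, hm⟩


/-- Let `C₀, C₁` be infinite cyclic groups and `Λ₀, Λ₁` quasilines (metric spaces
quasi-isometric to `ℤ`).  Suppose `C₀ × C₁` acts by isometries on both `Λ₀` and `Λ₁` so
that `Cᵢ` acts with unbounded orbits on `Λᵢ` and with orbits of diameter at most `B` on
`Λ_{1-i}`.  Then the diagonal action of `C₀ × C₁` on `Λ₀ × Λ₁` with the `ℓ¹` metric is
metrically proper and cobounded. -/
theorem product_quasilines_proper_cobounded
    {C₀ C₁ : Type*} [Group C₀] [Group C₁] [IsCyclic C₀] [IsCyclic C₁]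
    [Infinite C₀] [Infinite C₁]
    {Λ₀ Λ₁ : Type*} [MetricSpace Λ₀] [MetricSpace Λ₁]
    [MulAction (C₀ × C₁) Λ₀] [MulAction (C₀ × C₁) Λ₁]
    (hiso₀ : ∀ (g : C₀ × C₁) (x y : Λ₀), dist (g • x) (g • y) = dist x y)
    (hiso₁ : ∀ (g : C₀ × C₁) (x y : Λ₁), dist (g • x) (g • y) = dist x y)
    (B : ℝ)
    (hql₀ : ∃ f : Λ₀ → ℤ,
      (∀ x y : Λ₀, dist x y ≤ B * |(f x : ℝ) - (f y : ℝ)| + B ∧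
        |(f x : ℝ) - (f y : ℝ)| ≤ B * dist x y + B) ∧
      ∀ n : ℤ, ∃ x : Λ₀, |(f x : ℝ) - (n : ℝ)| ≤ B)
    (hql₁ : ∃ f : Λ₁ → ℤ,
      (∀ x y : Λ₁, dist x y ≤ B * |(f x : ℝ) - (f y : ℝ)| + B ∧
        |(f x : ℝ) - (f y : ℝ)| ≤ B * dist x y + B) ∧
      ∀ n : ℤ, ∃ x : Λ₁, |(f x : ℝ) - (n : ℝ)| ≤ B)
    (hunb₀ : ∀ (x : Λ₀) (R : ℝ), ∃ c : C₀, R < dist (((c, 1) : C₀ × C₁) • x) x)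
    (hunb₁ : ∀ (x : Λ₁) (R : ℝ), ∃ c : C₁, R < dist (((1, c) : C₀ × C₁) • x) x)
    (hbd₀ : ∀ (c c' : C₁) (x : Λ₀),
      dist (((1, c) : C₀ × C₁) • x) (((1, c') : C₀ × C₁) • x) ≤ B)
    (hbd₁ : ∀ (c c' : C₀) (x : Λ₁),
      dist (((c, 1) : C₀ × C₁) • x) (((c', 1) : C₀ × C₁) • x) ≤ B) :
    (∀ (x₀ : Λ₀) (x₁ : Λ₁) (L : ℝ),
        Set.Finite {g : C₀ × C₁ | dist (g • x₀) x₀ + dist (g • x₁) x₁ ≤ L}) ∧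
    (∀ (x₀ : Λ₀) (x₁ : Λ₁), ∃ R : ℝ, ∀ (y₀ : Λ₀) (y₁ : Λ₁),
        ∃ g : C₀ × C₁, dist (g • x₀) y₀ + dist (g • x₁) y₁ ≤ R) := by
  obtain ⟨f₀, hf₀, -⟩ := hql₀
  obtain ⟨f₁, hf₁, -⟩ := hql₁
  obtain ⟨a, ha⟩ := IsCyclic.exists_generator (α := C₀)
  obtain ⟨b, hb⟩ := IsCyclic.exists_generator (α := C₁)
  have hgen₀ : ∀ c : C₀, ∃ m : ℤ, a ^ m = c := fun c => Subgroup.mem_zpowers_iff.mp (ha c)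
  have hgen₁ : ∀ c : C₁, ∃ m : ℤ, b ^ m = c := fun c => Subgroup.mem_zpowers_iff.mp (hb c)
  have hpow₀ : ∀ m : ℤ, ((a, (1:C₁)) : C₀ × C₁) ^ m = (a ^ m, 1) := by
    intro m; ext <;> simp
  have hpow₁ : ∀ m : ℤ, (((1:C₀), b) : C₀ × C₁) ^ m = (1, b ^ m) := by
    intro m; ext <;> simp
  have hone₀ : (((1:C₀), (1:C₁)) : C₀ × C₁) = 1 := rfl
  have fact₀ : ∀ x₀ : Λ₀,
      (∀ L : ℝ, {m : ℤ | dist ((((a, (1:C₁)) : C₀ × C₁) ^ m) • x₀) x₀ ≤ L}.Finite) ∧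
      (∀ z : Λ₀, ∃ m : ℤ, dist ((((a, (1:C₁)) : C₀ × C₁) ^ m) • x₀) z ≤
        B * (B * dist (((a, (1:C₁)) : C₀ × C₁) • x₀) x₀ + B) + B) := by
    intro x₀
    refine orbit_facts hiso₀ f₀ B hf₀ ((a, 1) : C₀ × C₁) x₀ ?_
    intro R
    obtain ⟨c, hc⟩ := hunb₀ x₀ R
    obtain ⟨m, hm⟩ := hgen₀ c
    refine ⟨m, ?_⟩
    rw [hpow₀ m, hm]
    exact hc
  have fact₁ : ∀ x₁ : Λ₁,
      (∀ L : ℝ, {m : ℤ | dist (((((1:C₀), b) : C₀ × C₁) ^ m) • x₁) x₁ ≤ L}.Finite) ∧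
      (∀ z : Λ₁, ∃ m : ℤ, dist (((((1:C₀), b) : C₀ × C₁) ^ m) • x₁) z ≤
        B * (B * dist ((((1:C₀), b) : C₀ × C₁) • x₁) x₁ + B) + B) := by
    intro x₁
    refine orbit_facts hiso₁ f₁ B hf₁ ((1, b) : C₀ × C₁) x₁ ?_
    intro R
    obtain ⟨c, hc⟩ := hunb₁ x₁ R
    obtain ⟨m, hm⟩ := hgen₁ c
    refine ⟨m, ?_⟩
    rw [hpow₁ m, hm]
    exact hc
  constructor
  · -- metrically proper
    intro x₀ x₁ L
    have hfin₀ := (fact₀ x₀).1 (L + B)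
    have hfin₁ := (fact₁ x₁).1 (L + B)
    apply Set.Finite.subset ((hfin₀.prod hfin₁).image
      (fun p : ℤ × ℤ => ((a ^ p.1, b ^ p.2) : C₀ × C₁)))
    intro g hg
    simp only [Set.mem_setOf_eq] at hg
    obtain ⟨m, hm⟩ := hgen₀ g.1
    obtain ⟨n, hn⟩ := hgen₁ g.2
    have hg' : (g.1, g.2) = g := rfl
    have hgx₀ : dist (g • x₀) x₀ ≤ L :=
      le_trans (by linarith [dist_nonneg (x := g • x₁) (y := x₁)]) le_rfl
    have hgx₁ : dist (g • x₁) x₁ ≤ L := by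
      linarith [dist_nonneg (x := g • x₀) (y := x₀)]
    have key₀ : dist (((g.1, (1:C₁)) : C₀ × C₁) • x₀) (g • x₀) ≤ B := by
      have hsplit : g = ((g.1, (1:C₁)) : C₀ × C₁) * ((1, g.2) : C₀ × C₁) := by
        ext <;> simp
      calc dist (((g.1, (1:C₁)) : C₀ × C₁) • x₀) (g • x₀)
          = dist (((g.1, (1:C₁)) : C₀ × C₁) • x₀)
            (((g.1, (1:C₁)) : C₀ × C₁) • (((1, g.2) : C₀ × C₁) • x₀)) := by
            rw [← mul_smul, ← hsplit]
        _ = dist x₀ (((1, g.2) : C₀ × C₁) • x₀) := hiso₀ _ _ _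
        _ ≤ B := by
            have := hbd₀ 1 g.2 x₀
            rwa [hone₀, one_smul] at this
    have key₁ : dist ((((1:C₀), g.2) : C₀ × C₁) • x₁) (g • x₁) ≤ B := by
      have hsplit : g = (((1:C₀), g.2) : C₀ × C₁) * ((g.1, 1) : C₀ × C₁) := by
        ext <;> simp
      calc dist ((((1:C₀), g.2) : C₀ × C₁) • x₁) (g • x₁)
          = dist ((((1:C₀), g.2) : C₀ × C₁) • x₁)
            ((((1:C₀), g.2) : C₀ × C₁) • (((g.1, 1) : C₀ × C₁) • x₁)) := by
            rw [← mul_smul, ← hsplit]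
        _ = dist x₁ (((g.1, (1:C₁)) : C₀ × C₁) • x₁) := hiso₁ _ _ _
        _ ≤ B := by
            have := hbd₁ 1 g.1 x₁
            rwa [hone₀, one_smul] at this
    refine ⟨(m, n), Set.mem_prod.mpr ⟨?_, ?_⟩, ?_⟩
    · show dist ((((a, (1:C₁)) : C₀ × C₁) ^ m) • x₀) x₀ ≤ L + B
      rw [hpow₀ m, hm]
      calc dist (((g.1, (1:C₁)) : C₀ × C₁) • x₀) x₀
          ≤ dist (((g.1, (1:C₁)) : C₀ × C₁) • x₀) (g • x₀) + dist (g • x₀) x₀ :=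
            dist_triangle _ _ _
        _ ≤ L + B := by linarith
    · show dist (((((1:C₀), b) : C₀ × C₁) ^ n) • x₁) x₁ ≤ L + B
      rw [hpow₁ n, hn]
      calc dist ((((1:C₀), g.2) : C₀ × C₁) • x₁) x₁
          ≤ dist ((((1:C₀), g.2) : C₀ × C₁) • x₁) (g • x₁) + dist (g • x₁) x₁ :=
            dist_triangle _ _ _
        _ ≤ L + B := by linarith
    · show ((a ^ m, b ^ n) : C₀ × C₁) = g
      rw [hm, hn]
  · -- cobounded
    intro x₀ x₁
    have hcob₀ := (fact₀ x₀).2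
    have hcob₁ := (fact₁ x₁).2
    set R₀ : ℝ := B * (B * dist (((a, (1:C₁)) : C₀ × C₁) • x₀) x₀ + B) + B with hR₀
    set R₁ : ℝ := B * (B * dist ((((1:C₀), b) : C₀ × C₁) • x₁) x₁ + B) + B with hR₁
    refine ⟨(R₀ + B) + (R₁ + B), ?_⟩
    intro y₀ y₁
    obtain ⟨m, hm⟩ := hcob₀ y₀
    obtain ⟨n, hn⟩ := hcob₁ y₁
    rw [hpow₀ m] at hm
    rw [hpow₁ n] at hn
    refine ⟨((a ^ m, b ^ n) : C₀ × C₁), ?_⟩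
    have key₀ : dist (((a ^ m, b ^ n) : C₀ × C₁) • x₀) (((a ^ m, (1:C₁)) : C₀ × C₁) • x₀) ≤ B := by
      have hsplit : ((a ^ m, b ^ n) : C₀ × C₁) =
          ((a ^ m, (1:C₁)) : C₀ × C₁) * (((1:C₀), b ^ n) : C₀ × C₁) := by
        ext <;> simp
      calc dist (((a ^ m, b ^ n) : C₀ × C₁) • x₀) (((a ^ m, (1:C₁)) : C₀ × C₁) • x₀)
          = dist (((a ^ m, (1:C₁)) : C₀ × C₁) • ((((1:C₀), b ^ n) : C₀ × C₁) • x₀))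
            (((a ^ m, (1:C₁)) : C₀ × C₁) • x₀) := by rw [← mul_smul, ← hsplit]
        _ = dist ((((1:C₀), b ^ n) : C₀ × C₁) • x₀) x₀ := hiso₀ _ _ _
        _ ≤ B := by
            have := hbd₀ (b ^ n) 1 x₀
            rwa [hone₀, one_smul] at this
    have key₁ : dist (((a ^ m, b ^ n) : C₀ × C₁) • x₁) ((((1:C₀), b ^ n) : C₀ × C₁) • x₁) ≤ B := by
      have hsplit : ((a ^ m, b ^ n) : C₀ × C₁) =
          (((1:C₀), b ^ n) : C₀ × C₁) * ((a ^ m, (1:C₁)) : C₀ × C₁) := by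
        ext <;> simp
      calc dist (((a ^ m, b ^ n) : C₀ × C₁) • x₁) ((((1:C₀), b ^ n) : C₀ × C₁) • x₁)
          = dist ((((1:C₀), b ^ n) : C₀ × C₁) • (((a ^ m, (1:C₁)) : C₀ × C₁) • x₁))
            ((((1:C₀), b ^ n) : C₀ × C₁) • x₁) := by rw [← mul_smul, ← hsplit]
        _ = dist (((a ^ m, (1:C₁)) : C₀ × C₁) • x₁) x₁ := hiso₁ _ _ _
        _ ≤ B := by
            have := hbd₁ (a ^ m) 1 x₁
            rwa [hone₀, one_smul] at this
    have t₀ : dist (((a ^ m, b ^ n) : C₀ × C₁) • x₀) y₀ ≤ B + R₀ := by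
      calc dist (((a ^ m, b ^ n) : C₀ × C₁) • x₀) y₀
          ≤ dist (((a ^ m, b ^ n) : C₀ × C₁) • x₀) (((a ^ m, (1:C₁)) : C₀ × C₁) • x₀)
            + dist (((a ^ m, (1:C₁)) : C₀ × C₁) • x₀) y₀ := dist_triangle _ _ _
        _ ≤ B + R₀ := by linarith [hm]
    have t₁ : dist (((a ^ m, b ^ n) : C₀ × C₁) • x₁) y₁ ≤ B + R₁ := by
      calc dist (((a ^ m, b ^ n) : C₀ × C₁) • x₁) y₁
          ≤ dist (((a ^ m, b ^ n) : C₀ × C₁) • x₁) ((((1:C₀), b ^ n) : C₀ × C₁) • x₁)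
            + dist ((((1:C₀), b ^ n) : C₀ × C₁) • x₁) y₁ := dist_triangle _ _ _
        _ ≤ B + R₁ := by linarith [hn]
    linarith
end

section
/- Let X and Y be metric spaces and f : X → Y a (K,K)-coarsely Lipschitz map. Suppose a group G acts by isometries, metrically properly on Y and coboundedly on X, and f is G-equivariant. Then f is uniformly metrically proper: for every L there exists D such that the preimage under f of any ball of radius L in Y has diameter at most D. -/
/-- Let `f : X → Y` be a `(K,K)`-coarsely Lipschitz map between metric spaces, let a
group `G` act by isometries, metrically properly on `Y` and coboundedly on `X`, and
suppose `f` is `G`-equivariant.  Then `f` is uniformly metrically proper: for every `L`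
there is `D` such that the preimage of any ball of radius `L` in `Y` has diameter at
most `D`. -/
theorem coarse_lipschitz_equivariant_is_uniformly_proper
    {G X Y : Type*} [Group G] [MetricSpace X] [MetricSpace Y]
    [MulAction G X] [MulAction G Y]
    (hisoX : ∀ (g : G) (x x' : X), dist (g • x) (g • x') = dist x x')
    (hisoY : ∀ (g : G) (y y' : Y), dist (g • y) (g • y') = dist y y')
    (hproper : ∀ (y : Y) (L : ℝ), Set.Finite {g : G | dist (g • y) y ≤ L})
    (hcobdd : ∃ (x : X) (R : ℝ), ∀ x' : X, ∃ g : G, dist (g • x) x' ≤ R)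
    (f : X → Y) (K : ℝ)
    (hlip : ∀ x x' : X, dist (f x) (f x') ≤ K * dist x x' + K)
    (hequiv : ∀ (g : G) (x : X), f (g • x) = g • f x) :
    ∀ L : ℝ, ∃ D : ℝ, ∀ (y : Y) (x x' : X),
      dist (f x) y ≤ L → dist (f x') y ≤ L → dist x x' ≤ D := by
  intro L
  obtain ⟨x₀, R, hR⟩ := hcobdd
  have hK : 0 ≤ K := by nlinarith [hlip x₀ x₀, dist_self (f x₀), dist_self x₀]
  set M : ℝ := 2 * L + 2 * (K * R + K) with hM
  have hfin : Set.Finite {g : G | dist (g • f x₀) (f x₀) ≤ M} := hproper (f x₀) M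
  obtain ⟨C, hC⟩ : ∃ C : ℝ, ∀ h ∈ {g : G | dist (g • f x₀) (f x₀) ≤ M},
      dist (h • x₀) x₀ ≤ C := by
    obtain ⟨C, hC⟩ := (hfin.image (fun h => dist (h • x₀) x₀)).bddAbove
    exact ⟨C, fun h hh => hC (Set.mem_image_of_mem _ hh)⟩
  refine ⟨2 * R + C, fun y x x' hx hx' => ?_⟩
  obtain ⟨g, hg⟩ := hR x
  obtain ⟨g', hg'⟩ := hR x'
  have h1 : dist (g • f x₀) (f x) ≤ K * R + K := by
    rw [← hequiv]
    calc dist (f (g • x₀)) (f x) ≤ K * dist (g • x₀) x + K := hlip _ _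
      _ ≤ K * R + K := by nlinarith
  have h2 : dist (g' • f x₀) (f x') ≤ K * R + K := by
    rw [← hequiv]
    calc dist (f (g' • x₀)) (f x') ≤ K * dist (g' • x₀) x' + K := hlip _ _
      _ ≤ K * R + K := by nlinarith
  have hmem : (g'⁻¹ * g) ∈ {g : G | dist (g • f x₀) (f x₀) ≤ M} := by
    have : dist ((g'⁻¹ * g) • f x₀) (f x₀) = dist (g • f x₀) (g' • f x₀) := by
      rw [← hisoY g' ((g'⁻¹ * g) • f x₀) (f x₀), ← mul_smul, mul_inv_cancel_left]
    simp only [Set.mem_setOf_eq, this]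
    calc dist (g • f x₀) (g' • f x₀)
        ≤ dist (g • f x₀) (f x) + dist (f x) y + dist y (f x') + dist (f x') (g' • f x₀) := by
          have := dist_triangle4 (g • f x₀) (f x) y (f x')
          have := dist_triangle (g • f x₀) (f x') (g' • f x₀)
          linarith [dist_triangle4 (g • f x₀) (f x) y (f x'),
            dist_triangle (g • f x₀) (f x') (g' • f x₀)]
      _ ≤ M := by rw [dist_comm y (f x'), dist_comm (f x') (g' • f x₀)]; linarith
  have hgg : dist (g • x₀) (g' • x₀) ≤ C := by
    have : dist ((g'⁻¹ * g) • x₀) x₀ = dist (g • x₀) (g' • x₀) := by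
      rw [← hisoX g' ((g'⁻¹ * g) • x₀) x₀, ← mul_smul, mul_inv_cancel_left]
    rw [← this]
    exact hC _ hmem
  calc dist x x' ≤ dist x (g • x₀) + dist (g • x₀) (g' • x₀) + dist (g' • x₀) x' :=
        dist_triangle4 _ _ _ _
    _ ≤ 2 * R + C := by rw [dist_comm x (g • x₀)]; linarith
end

section
/- Let T be a simplicial tree on which a group G acts by isometries, let w and w' be distinct vertices of T, and let g, g' ∈ G be such that for every nonzero integer k, the fixed-point set of g^k in T is exactly {w} and the fixed-point set of (g')^k is exactly {w'}. Then g and g' generate a non-abelian free subgroup of G. -/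
open SimpleGraph Pointwise

section TreeAux

variable {V G : Type*} [Group G] {T : SimpleGraph V} [MulAction G V]

/-- The graph homomorphism given by the action of `c : G`. -/
private def actHomAux (hact : ∀ (g : G) (u v : V), T.Adj u v → T.Adj (g • u) (g • v)) (c : G) :
    T →g T := ⟨fun v => c • v, fun {u v} h => hact c u v h⟩

private lemma tree_dist_smul_le (hact : ∀ (g : G) (u v : V), T.Adj u v → T.Adj (g • u) (g • v))
    (hconn : T.Connected) (c : G) (x y : V) :
    T.dist (c • x) (c • y) ≤ T.dist x y := by
  obtain ⟨p, hp⟩ := hconn.exists_walk_length_eq_dist x y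
  calc T.dist (c • x) (c • y) ≤ (p.map (actHomAux hact c)).length := SimpleGraph.dist_le _
    _ = T.dist x y := by rw [Walk.length_map, hp]

private lemma tree_dist_smul (hact : ∀ (g : G) (u v : V), T.Adj u v → T.Adj (g • u) (g • v))
    (hconn : T.Connected) (c : G) (x y : V) :
    T.dist (c • x) (c • y) = T.dist x y := by
  refine le_antisymm (tree_dist_smul_le hact hconn c x y) ?_
  have := tree_dist_smul_le hact hconn c⁻¹ (c • x) (c • y)
  simpa using this

/-- Splitting a geodesic at a support vertex gives two geodesics. -/
private lemma geodesic_split [DecidableEq V] (hconn : T.Connected) {a b u : V} (p : T.Walk a b)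
    (hp : p.length = T.dist a b) (hu : u ∈ p.support) :
    T.dist a u = (p.takeUntil u hu).length ∧ T.dist u b = (p.dropUntil u hu).length := by
  have hlen : (p.takeUntil u hu).length + (p.dropUntil u hu).length = p.length := by
    rw [← Walk.length_append, Walk.take_spec]
  have h1 := SimpleGraph.dist_le (p.takeUntil u hu)
  have h2 := SimpleGraph.dist_le (p.dropUntil u hu)
  have h3 := hconn.dist_triangle (u := a) (v := u) (w := b)
  omega

/-- On a geodesic ending at `b`, a support vertex is determined by its distance to `b`. -/
private lemma eq_of_dist_eq [DecidableEq V] (hconn : T.Connected) {a b : V} (p : T.Walk a b)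
    (hp : p.length = T.dist a b) {u u' : V} (hu : u ∈ p.support) (hu' : u' ∈ p.support)
    (hd : T.dist u b = T.dist u' b) : u = u' := by
  obtain ⟨hs1, hs2⟩ := geodesic_split hconn p hp hu
  obtain ⟨hs1', hs2'⟩ := geodesic_split hconn p hp hu'
  have hlen : (p.takeUntil u hu).length + (p.dropUntil u hu).length = p.length := by
    rw [← Walk.length_append, Walk.take_spec]
  have hlen' : (p.takeUntil u' hu').length + (p.dropUntil u' hu').length = p.length := by
    rw [← Walk.length_append, Walk.take_spec]
  have hda : T.dist a u = T.dist a u' := by omega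
  have hmem : u' ∈ ((p.takeUntil u hu).append (p.dropUntil u hu)).support := by
    rw [Walk.take_spec]; exact hu'
  rw [Walk.mem_support_append_iff] at hmem
  rcases hmem with h | h
  · obtain ⟨t1, t2⟩ := geodesic_split hconn (p.takeUntil u hu) hs1.symm h
    have hl2 : ((p.takeUntil u hu).takeUntil u' h).length
        + ((p.takeUntil u hu).dropUntil u' h).length = (p.takeUntil u hu).length := by
      rw [← Walk.length_append, Walk.take_spec]
    have hz : T.dist u' u = 0 := by omega
    exact ((hconn.dist_eq_zero_iff).mp hz).symm
  · obtain ⟨t1, t2⟩ := geodesic_split hconn (p.dropUntil u hu) hs2.symm h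
    have hl2 : ((p.dropUntil u hu).takeUntil u' h).length
        + ((p.dropUntil u hu).dropUntil u' h).length = (p.dropUntil u hu).length := by
      rw [← Walk.length_append, Walk.take_spec]
    have hz : T.dist u u' = 0 := by omega
    exact (hconn.dist_eq_zero_iff).mp hz

/-- Key lemma: if `h` fixes exactly `w`, then `dist v (h • v) = 2 * dist v w`. -/
private lemma tree_dist_smul_self [DecidableEq V] (hT : T.IsTree)
    (hact : ∀ (g : G) (u v : V), T.Adj u v → T.Adj (g • u) (g • v))
    {h : G} {w : V} (hfix : ∀ v : V, h • v = v ↔ v = w) (v : V) :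
    T.dist v (h • v) = 2 * T.dist v w := by
  have hconn := hT.isConnected
  obtain ⟨p, hpp, hpl⟩ := hconn.exists_path_of_dist v w
  have hw : h • w = w := (hfix w).mpr rfl
  let q : T.Walk (h • v) w := ((p.map (actHomAux hact h)).copy rfl hw)
  have hq_len : q.length = p.length := by
    exact (Walk.length_copy _ _ _).trans (Walk.length_map _ _)
  have hq_dist : q.length = T.dist (h • v) w := by
    rw [hq_len, hpl]
    have hds := tree_dist_smul hact hconn h v w
    rw [hw] at hds
    exact hds.symm
  have hq_path : q.IsPath := by
    simp only [q, Walk.isPath_copy]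
    exact (Walk.isPath_copy _ _ _).mpr (Walk.map_isPath_of_injective (f := actHomAux hact h) (MulAction.injective h) hpp)
  have hq_supp : q.support = p.support.map (fun x => h • x) := by
    exact (Walk.support_copy _ _ _).trans (Walk.support_map _ _)
  have hW : (p.append q.reverse).IsPath := by
    rw [Walk.isPath_def, Walk.support_append]
    apply List.Nodup.append
    · exact hpp.support_nodup
    · exact ((Walk.isPath_reverse_iff q).mpr hq_path).support_nodup.tail
    · intro x hx hx'
      have hxq : x ∈ q.support := by
        have := List.tail_subset _ hx'
        rwa [Walk.support_reverse, List.mem_reverse] at this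
      have hxw : x ≠ w := by
        rintro rfl
        have hnd := ((Walk.isPath_reverse_iff q).mpr hq_path).support_nodup
        rw [Walk.support_eq_cons] at hnd
        exact (List.nodup_cons.mp hnd).1 hx'
      rw [hq_supp] at hxq
      obtain ⟨y, hy, hxy⟩ := List.mem_map.mp hxq
      have hdist : T.dist x w = T.dist y w := by
        have hds := tree_dist_smul hact hconn h y w
        rw [hw] at hds
        rw [← hxy, hds]
      have hxy2 : x = y := eq_of_dist_eq hconn p hpl hx hy hdist
      apply hxw
      rw [← (hfix x)]
      rw [hxy2] at hxy ⊢
      exact hxy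
  have hWlen : (p.append q.reverse).length = 2 * T.dist v w := by
    rw [Walk.length_append, Walk.length_reverse, hq_len, hpl]
    ring
  obtain ⟨P, hPp, hPl⟩ := hconn.exists_path_of_dist v (h • v)
  have hEq : p.append q.reverse = P := (hT.existsUnique_path v (h • v)).unique hW hPp
  rw [← hPl, ← hEq, hWlen]

end TreeAux

/-- Let a group `G` act on a simplicial tree `T`, let `w ≠ w'` be vertices, and let
`g, g' ∈ G` be such that for every nonzero `k`, the fixed-point set of `g^k` is exactly
`{w}` and that of `(g')^k` is exactly `{w'}`.  Then `g` and `g'` generate a non-abelian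
free subgroup: the homomorphism from the free group on two generators sending them to
`g` and `g'` is injective. -/
theorem free_subgroup_of_distinct_fixed_vertices
    {V G : Type*} [Group G] (T : SimpleGraph V) (hT : T.IsTree)
    [MulAction G V]
    (hact : ∀ (g : G) (u v : V), T.Adj u v → T.Adj (g • u) (g • v))
    (w w' : V) (hww' : w ≠ w') (g g' : G)
    (hg : ∀ k : ℤ, k ≠ 0 → {v : V | g ^ k • v = v} = {w})
    (hg' : ∀ k : ℤ, k ≠ 0 → {v : V | g' ^ k • v = v} = {w'}) :
    Function.Injective ⇑(FreeGroup.lift (fun b : Bool => if b then g else g')) := by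
  classical
  have hconn := hT.isConnected
  have hgfix : ∀ k : ℤ, k ≠ 0 → ∀ v : V, g ^ k • v = v ↔ v = w := by
    intro k hk v
    have := Set.ext_iff.mp (hg k hk) v
    simpa using this
  have hgfix' : ∀ k : ℤ, k ≠ 0 → ∀ v : V, g' ^ k • v = v ↔ v = w' := by
    intro k hk v
    have := Set.ext_iff.mp (hg' k hk) v
    simpa using this
  have main : ∀ (h : G) (w₀ w₁ : V), (∀ v, h • v = v ↔ v = w₀) →
      ∀ v, T.dist v w₁ < T.dist v w₀ → T.dist (h • v) w₀ < T.dist (h • v) w₁ := by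
    intro h w₀ w₁ hfix v hv
    have h2 := tree_dist_smul_self hT hact hfix v
    have htri := hconn.dist_triangle (u := v) (v := w₁) (w := h • v)
    have h3 : T.dist (h • v) w₀ = T.dist v w₀ := by
      have hds := tree_dist_smul hact hconn h v w₀
      rwa [(hfix w₀).mpr rfl] at hds
    have h4 : T.dist w₁ (h • v) = T.dist (h • v) w₁ := SimpleGraph.dist_comm
    omega
  set A : Set V := {v | T.dist v w < T.dist v w'} with hA
  set B : Set V := {v | T.dist v w' < T.dist v w} with hB
  set X : Bool → Set V := fun b => if b then A else B with hXdef
  have hXt : X true = A := if_pos rfl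
  have hXf : X false = B := if_neg (by simp)
  have key : (FreeGroup.lift (fun b : Bool => if b then g else g')) =
      (Monoid.CoprodI.lift fun i : Bool =>
        FreeGroup.lift fun _ : Unit => (if i then g else g')).comp
        (@freeGroupEquivCoprodI Bool).toMonoidHom := by
    ext i
    simp
  rw [key, MonoidHom.coe_comp]
  refine Function.Injective.comp ?_ (MulEquiv.injective freeGroupEquivCoprodI)
  apply Monoid.CoprodI.lift_injective_of_ping_pong _ _ X
  · -- nonempty
    intro i
    cases i with
    | false =>
      rw [hXf]
      refine ⟨w', ?_⟩
      simp only [hB, Set.mem_setOf_eq, SimpleGraph.dist_self]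
      exact hconn.pos_dist_of_ne hww'.symm
    | true =>
      rw [hXt]
      refine ⟨w, ?_⟩
      simp only [hA, Set.mem_setOf_eq, SimpleGraph.dist_self]
      exact hconn.pos_dist_of_ne hww'
  · -- disjoint
    have hd : Disjoint A B := by
      rw [Set.disjoint_left]
      intro v h1 h2
      rw [hA, Set.mem_setOf_eq] at h1
      rw [hB, Set.mem_setOf_eq] at h2
      omega
    intro i j hij
    cases i <;> cases j
    · exact absurd rfl hij
    · show Disjoint (X false) (X true)
      rw [hXf, hXt]; exact hd.symm
    · show Disjoint (X true) (X false)
      rw [hXf, hXt]; exact hd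
    · exact absurd rfl hij
  · -- ping-pong condition
    intro i j hij
    refine FreeGroup.freeGroupUnitEquivInt.forall_congr_left.mpr ?_
    intro n hne1
    change FreeGroup.lift (fun _ => if i then g else g') (FreeGroup.of () ^ n) • X j ⊆ X i
    simp only [map_zpow, FreeGroup.lift_apply_of]
    have hnne0 : n ≠ 0 := by
      rintro rfl
      apply hne1
      simp [FreeGroup.freeGroupUnitEquivInt]
    intro x hx
    rw [Set.mem_smul_set] at hx
    obtain ⟨v, hv, rfl⟩ := hx
    cases i with
    | true =>
      have hjf : j = false := by
        cases j
        · rfl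
        · exact absurd rfl hij
      subst hjf
      rw [hXf, hB, Set.mem_setOf_eq] at hv
      rw [if_pos rfl, hXt, hA, Set.mem_setOf_eq]
      exact main (g ^ n) w w' (hgfix n hnne0) v hv
    | false =>
      have hjf : j = true := by
        cases j
        · exact absurd rfl hij
        · rfl
      subst hjf
      rw [hXt, hA, Set.mem_setOf_eq] at hv
      rw [hXf, hB, Set.mem_setOf_eq]
      exact main (g' ^ n) w' w (hgfix' n hnne0) v hv
  · -- cardinality
    right
    refine ⟨true, ?_⟩
    rw [FreeGroup.freeGroupUnitEquivInt.cardinal_eq, Cardinal.mk_denumerable]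
    exact le_of_lt (Cardinal.nat_lt_aleph0 3)
end

section
/- Let Λ be a metric space (B,B)-quasi-isometric to ℝ (a quasiline). Then there exists a constant M₀ such that for all M ≥ M₀ there is a partial order ≺ on Λ with: (i) any two points at distance ≥ M are ≺-comparable; (ii) for every z there exist points z₁ ≺ z ≺ z₂ with d(z, z_i) ∈ [M, 2M]; (iii) if x ≺ y ≺ z with d(x,y) ≥ M and d(y,z) ≥ M, then any geodesic from x to z passes within distance M/10 of y. -/
/-- Order on a quasiline.  Let `Λ` be a metric space `(B,B)`-quasi-isometric to `ℝ`.
Then there is a constant `M₀` such that for all `M ≥ M₀` there is a (strict) partial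
order `≺` on `Λ` with: (i) points at distance `≥ M` are comparable; (ii) every `z` has
`z₁ ≺ z ≺ z₂` with `dist z zᵢ ∈ [M, 2M]`; (iii) if `x ≺ y ≺ z` with
`dist x y, dist y z ≥ M`, then any geodesic from `x` to `z` passes within `M/10` of
`y`. -/
theorem quasiline_order
    {Λ : Type*} [MetricSpace Λ] (B : ℝ) (hB : 1 ≤ B)
    (f : Λ → ℝ)
    (hqi : ∀ x y : Λ, dist x y / B - B ≤ |f x - f y| ∧ |f x - f y| ≤ B * dist x y + B)
    (hcs : ∀ r : ℝ, ∃ x : Λ, |f x - r| ≤ B) :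
    ∃ M₀ : ℝ, 0 < M₀ ∧ ∀ M : ℝ, M₀ ≤ M →
      ∃ lt : Λ → Λ → Prop,
        (∀ x, ¬ lt x x) ∧ (∀ x y z, lt x y → lt y z → lt x z) ∧
        (∀ x y : Λ, M ≤ dist x y → lt x y ∨ lt y x) ∧
        (∀ z : Λ, ∃ z₁ z₂ : Λ, lt z₁ z ∧ lt z z₂ ∧
          dist z z₁ ∈ Set.Icc M (2 * M) ∧ dist z z₂ ∈ Set.Icc M (2 * M)) ∧
        (∀ x y z : Λ, lt x y → lt y z → M ≤ dist x y → M ≤ dist y z →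
          ∀ γ : ℝ → Λ,
            (∀ s ∈ Set.Icc (0 : ℝ) (dist x z), ∀ t ∈ Set.Icc (0 : ℝ) (dist x z),
              dist (γ s) (γ t) = |s - t|) →
            γ 0 = x → γ (dist x z) = z →
            ∃ t ∈ Set.Icc (0 : ℝ) (dist x z), dist (γ t) y ≤ M / 10) := by
  classical
  have hB0 : (0:ℝ) < B := lt_of_lt_of_le one_pos hB
  -- upper bound on distance from f-proximity
  have key2 : ∀ a b : Λ, dist a b ≤ B * |f a - f b| + B * B := by
    intro a b
    have h := (hqi a b).1
    have h' : dist a b / B ≤ |f a - f b| + B := by linarith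
    calc dist a b = dist a b / B * B := (div_mul_cancel₀ _ hB0.ne').symm
      _ ≤ (|f a - f b| + B) * B := mul_le_mul_of_nonneg_right h' hB0.le
      _ = B * |f a - f b| + B * B := by ring
  have key3 : ∀ a b : Λ, |f a - f b| ≤ B * dist a b + B := fun a b => (hqi a b).2
  refine ⟨100 * B * B, by nlinarith, ?_⟩
  intro M hM
  refine ⟨fun a b => f a < f b, fun x => lt_irrefl _, fun x y z h1 h2 => lt_trans h1 h2,
    ?_, ?_, ?_⟩
  · -- comparability
    intro x y hd
    have h := key2 x y
    have : f x ≠ f y := by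
      intro hne
      rw [hne, sub_self, abs_zero] at h
      nlinarith
    rcases lt_or_gt_of_ne this with h | h
    · exact Or.inl h
    · exact Or.inr h
  · -- existence of z₁, z₂
    have main : ∀ ε : ℝ, |ε| = 1 → ∀ z : Λ, ∃ w : Λ,
        B < ε * (f w - f z) ∧ M ≤ dist z w ∧ dist z w ≤ 2 * M := by
      intro ε hε z
      have hε2 : ε * ε = 1 := by
        have := abs_mul_abs_self ε
        rw [hε] at this; linarith
      choose g hg using fun n : ℕ => hcs (f z + ε * n)
      -- value bounds
      have hval : ∀ n : ℕ, (n:ℝ) - B ≤ ε * (f (g n) - f z) ∧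
          ε * (f (g n) - f z) ≤ (n:ℝ) + B := by
        intro n
        have h2 : |ε * (f (g n) - (f z + ε * n))| ≤ B := by
          rw [abs_mul, hε, one_mul]; exact hg n
        have h3 : ε * (f (g n) - f z) = ε * (f (g n) - (f z + ε * n)) + n := by
          linear_combination (n:ℝ) * hε2
        obtain ⟨ha, hb⟩ := abs_le.mp h2
        constructor <;> linarith
      have habs : ∀ n : ℕ, (n:ℝ) - B ≤ |f (g n) - f z| := by
        intro n
        have := (hval n).1
        have h2 : ε * (f (g n) - f z) ≤ |ε * (f (g n) - f z)| := le_abs_self _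
        rw [abs_mul, hε, one_mul] at h2
        linarith
      -- step size bound
      have hstep : ∀ n : ℕ, dist (g n) (g (n+1)) ≤ 3 * B * B + B := by
        intro n
        have h1 := abs_le.mp (hg n)
        have h2 := abs_le.mp (hg (n+1))
        push_cast at h2
        have hεb := abs_le.mp (le_of_eq hε)
        have hd : |f (g n) - f (g (n+1))| ≤ 2 * B + 1 := by
          rw [abs_le]
          constructor <;> nlinarith [h1.1, h1.2, h2.1, h2.2, hεb.1, hεb.2]
        have := key2 (g n) (g (n+1))
        nlinarith
      -- existence of far point
      have hex : ∃ n : ℕ, M ≤ dist z (g n) := by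
        refine ⟨⌈B * M + 2 * B⌉₊, ?_⟩
        have hle : B * M + 2 * B ≤ (⌈B * M + 2 * B⌉₊ : ℝ) := Nat.le_ceil _
        have h1 := habs ⌈B * M + 2 * B⌉₊
        have h2 := key3 (g ⌈B * M + 2 * B⌉₊) z
        rw [dist_comm] at h2
        nlinarith
      set N := Nat.find hex with hNdef
      have hN : M ≤ dist z (g N) := Nat.find_spec hex
      have hN0 : N ≠ 0 := by
        intro h
        rw [h] at hN
        have h1 := key2 z (g 0)
        have h2 := (hval 0).1
        have h3 := (hval 0).2
        have h4 : |f z - f (g 0)| ≤ B := by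
          rw [abs_sub_comm, abs_le]
          have h5 : |ε * (f (g 0) - f z)| ≤ B := by
            rw [abs_le]; constructor <;> push_cast at h2 h3 <;> linarith
          rw [abs_mul, hε, one_mul] at h5
          exact abs_le.mp h5
        nlinarith
      obtain ⟨k, hk⟩ : ∃ k, N = k + 1 := ⟨N - 1, (Nat.succ_pred_eq_of_ne_zero hN0).symm⟩
      have hk1 : dist z (g k) < M := by
        have := Nat.find_min hex (m := k) (by omega)
        linarith [not_le.mp this]
      have hupper : dist z (g N) ≤ 2 * M := by
        have ht := dist_triangle z (g k) (g (k+1))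
        have hs := hstep k
        rw [hk]
        nlinarith
      have hsign : B < ε * (f (g N) - f z) := by
        have h1 := key2 z (g N)
        have h2 : (99:ℝ) * B * B ≤ B * |f z - f (g N)| := by nlinarith
        have h3 : (99:ℝ) * B ≤ |f z - f (g N)| := by nlinarith
        rw [abs_sub_comm] at h3
        have h4 : (1:ℝ) - B ≤ ε * (f (g N) - f z) := by
          have := (hval N).1
          have hN1 : (1:ℝ) ≤ (N:ℝ) := by
            have : 1 ≤ N := Nat.one_le_iff_ne_zero.mpr hN0
            exact_mod_cast this
          linarith
        have h5 : |ε * (f (g N) - f z)| = |f (g N) - f z| := by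
          rw [abs_mul, hε, one_mul]
        rcases abs_cases (ε * (f (g N) - f z)) with ⟨he, _⟩ | ⟨he, _⟩
        · rw [h5] at he; nlinarith
        · rw [h5] at he; nlinarith
      exact ⟨g N, hsign, hN, hupper⟩
    intro z
    obtain ⟨z₁, hs1, hd1, hd1'⟩ := main (-1) (by norm_num) z
    obtain ⟨z₂, hs2, hd2, hd2'⟩ := main 1 (by norm_num) z
    exact ⟨z₁, z₂, by simp only; nlinarith, by simp only; nlinarith,
      ⟨hd1, hd1'⟩, ⟨hd2, hd2'⟩⟩
  · -- geodesics pass near middle points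
    intro x y z hxy hyz hMxy hMyz γ hγ hγ0 hγL
    set L := dist x z with hL
    have hL0 : (0:ℝ) ≤ L := dist_nonneg
    have hu : ∀ k : ℕ, min (k:ℝ) L ∈ Set.Icc (0:ℝ) L :=
      fun k => ⟨le_min (Nat.cast_nonneg k) hL0, min_le_right _ _⟩
    have hstep : ∀ k : ℕ, |f (γ (min ((k:ℝ)) L)) - f (γ (min ((k:ℝ)+1) L))| ≤ 2 * B := by
      intro k
      have hmem : min ((k:ℝ)+1) L ∈ Set.Icc (0:ℝ) L :=
        ⟨le_min (by positivity) hL0, min_le_right _ _⟩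
      have hd := hγ _ (hu k) _ hmem
      have habs : |min ((k:ℝ)) L - min ((k:ℝ)+1) L| ≤ 1 := by
        have h1 : min ((k:ℝ)) L ≤ min ((k:ℝ)+1) L := min_le_min (by linarith) le_rfl
        have h2 : min ((k:ℝ)+1) L ≤ min ((k:ℝ)) L + 1 := by
          rcases le_total ((k:ℝ)) L with h | h
          · rw [min_eq_left h]
            exact le_trans (min_le_left _ _) le_rfl
          · rw [min_eq_right h, min_eq_right (by linarith : L ≤ (k:ℝ)+1)]
            linarith
        rw [abs_le]; constructor <;> linarith
      have := key3 (γ (min ((k:ℝ)) L)) (γ (min ((k:ℝ)+1) L))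
      rw [hd] at this
      nlinarith [abs_nonneg (min ((k:ℝ)) L - min ((k:ℝ)+1) L)]
    have hexk : ∃ k : ℕ, f y ≤ f (γ (min ((k:ℝ)) L)) := by
      refine ⟨⌈L⌉₊, ?_⟩
      rw [min_eq_right (Nat.le_ceil L), hγL]
      exact le_of_lt hyz
    set K := Nat.find hexk with hKdef
    have hK : f y ≤ f (γ (min ((K:ℝ)) L)) := Nat.find_spec hexk
    have hK0 : K ≠ 0 := by
      intro h
      rw [h] at hK
      simp only [Nat.cast_zero, min_eq_left hL0, hγ0] at hK
      exact absurd hK (not_le.mpr hxy)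
    obtain ⟨j, hj⟩ : ∃ j, K = j + 1 := ⟨K - 1, (Nat.succ_pred_eq_of_ne_zero hK0).symm⟩
    have hj1 : f (γ (min ((j:ℝ)) L)) < f y := by
      have := Nat.find_min hexk (m := j) (by omega)
      exact not_le.mp this
    have hjcast : ((K:ℝ)) = (j:ℝ) + 1 := by rw [hj]; push_cast; ring
    have hclose : |f (γ (min ((K:ℝ)) L)) - f y| ≤ 2 * B := by
      have hs := hstep j
      rw [← hjcast] at hs
      obtain ⟨ha, hb⟩ := abs_le.mp hs
      rw [abs_le]
      constructor <;> linarith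
    refine ⟨min ((K:ℝ)) L, hu K, ?_⟩
    have := key2 (γ (min ((K:ℝ)) L)) y
    nlinarith
end

section
/- Let F be a hyperbolic group and {⟨a_α⟩}_{α∈I} a finite malnormal collection of infinite cyclic subgroups of F (meaning: for g ∈ F and α, β ∈ I, if g⟨a_α⟩g⁻¹ ∩ ⟨a_β⟩ ≠ {1} then α = β and g ∈ ⟨a_α⟩-normaliser appropriately). Given, for each α, a homogeneous quasimorphism ψ'_α : F → ℝ with ψ'_α(a_α) = 1 and ψ'_α(a_β) = 0 for β ≠ α, and given a homogeneous quasimorphism ψ₀ on a central extension 1 → ℤ → G → F → 1 unbounded on the centre, the quasimorphism ψ = ψ₀ − Σ_α ψ₀(a_α)·(ψ'_α ∘ π) : G → ℝ satisfies: ψ is unbounded on the central ℤ, and for each α, each c in the preimage cyclic subgroup C_α with π(C_α) = ⟨a_α⟩ and ψ(C_α) = {0}, and all g, x ∈ G, the quantity |ψ(g c g⁻¹ x) − ψ(x)| is bounded by 3 times the defect of ψ. In particular ψ(gC_αg⁻¹x) is contained in an interval of uniformly bounded length. -/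
/-- Quasimorphism vanishing on cyclic subgroups.  Let `1 → ℤ →ι G →π F → 1` be a central
extension, `a α` elements of `F` generating a malnormal collection of infinite cyclic
subgroups, `c α ∈ G` lifts of the `a α` generating the cyclic subgroups `C α`.  Given a
homogeneous quasimorphism `ψ₀` on `G` unbounded on the centre, and homogeneous
quasimorphisms `ψ' α` on `F` with `ψ' α (a β) = δ_{αβ}`, the quasimorphism
`ψ = ψ₀ − Σ_α ψ₀(c α)·(ψ' α ∘ π)` satisfies: `ψ` vanishes on each `C α`, `ψ` is
unbounded on `ι(ℤ)`, and `|ψ(g c g⁻¹ x) − ψ(x)| ≤ 3·(defect of ψ)` for all `c ∈ C α`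
and `g, x ∈ G`; in particular `ψ(g C_α g⁻¹ x)` lies in an interval of uniformly bounded
length. -/
theorem quasimorphism_combination
    {G F : Type*} [Group G] [Group F] (π : G →* F)
    (ι : Multiplicative ℤ →* G) (hker : ∀ t : Multiplicative ℤ, π (ι t) = 1)
    {I : Type*} [Fintype I] [DecidableEq I]
    (a : I → F) (c : I → G) (hc : ∀ α : I, π (c α) = a α)
    (ψ₀ : G → ℝ) (D₀ : ℝ)
    (hψ₀qm : ∀ x y : G, |ψ₀ (x * y) - ψ₀ x - ψ₀ y| ≤ D₀)
    (hψ₀hom : ∀ (x : G) (n : ℤ), ψ₀ (x ^ n) = n * ψ₀ x)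
    (hψ₀unb : ∀ N : ℝ, ∃ t : Multiplicative ℤ, N ≤ |ψ₀ (ι t)|)
    (ψ' : I → F → ℝ) (D' : ℝ)
    (hψ'qm : ∀ (α : I) (x y : F), |ψ' α (x * y) - ψ' α x - ψ' α y| ≤ D')
    (hψ'hom : ∀ (α : I) (x : F) (n : ℤ), ψ' α (x ^ n) = n * ψ' α x)
    (hδ : ∀ α β : I, ψ' α (a β) = if α = β then 1 else 0) :
    let ψ : G → ℝ := fun g => ψ₀ g - ∑ β : I, ψ₀ (c β) * ψ' β (π g)
    (∀ (α : I) (n : ℤ), ψ ((c α) ^ n) = 0) ∧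
    (∀ N : ℝ, ∃ t : Multiplicative ℤ, N ≤ |ψ (ι t)|) ∧
    (∃ D : ℝ,
      (∀ x y : G, |ψ (x * y) - ψ x - ψ y| ≤ D) ∧
      ∀ (α : I) (n : ℤ) (g x : G),
        |ψ (g * (c α) ^ n * g⁻¹ * x) - ψ x| ≤ 3 * D) := by
  intro ψ
  have hψ'one : ∀ α : I, ψ' α 1 = 0 := by
    intro α
    have := hψ'hom α 1 0
    simpa using this
  -- Part 1: ψ vanishes on each C α
  have hvan : ∀ (α : I) (n : ℤ), ψ ((c α) ^ n) = 0 := by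
    intro α n
    have hπ : π ((c α) ^ n) = (a α) ^ n := by rw [map_zpow, hc]
    simp only [ψ, hπ, hψ₀hom, hψ'hom, hδ, mul_ite, mul_one, mul_zero]
    rw [Finset.sum_ite_eq' Finset.univ α (fun β => ψ₀ (c β) * n)]
    simp [mul_comm]
  refine ⟨hvan, ?_, ?_⟩
  · -- Part 2: unbounded on the centre
    intro N
    obtain ⟨t, ht⟩ := hψ₀unb N
    refine ⟨t, ?_⟩
    have : ψ (ι t) = ψ₀ (ι t) := by
      simp [ψ, hker, hψ'one]
    rw [this]; exact ht
  · -- Part 3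
    set D : ℝ := D₀ + ∑ β : I, |ψ₀ (c β)| * D' with hD
    have hqm : ∀ x y : G, |ψ (x * y) - ψ x - ψ y| ≤ D := by
      intro x y
      have key : ψ (x * y) - ψ x - ψ y =
          (ψ₀ (x * y) - ψ₀ x - ψ₀ y)
          - ∑ β : I, ψ₀ (c β) * (ψ' β (π x * π y) - ψ' β (π x) - ψ' β (π y)) := by
        simp only [ψ, map_mul, mul_sub, Finset.sum_sub_distrib]
        ring
      rw [key]
      calc |(ψ₀ (x * y) - ψ₀ x - ψ₀ y)
          - ∑ β : I, ψ₀ (c β) * (ψ' β (π x * π y) - ψ' β (π x) - ψ' β (π y))|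
          ≤ |ψ₀ (x * y) - ψ₀ x - ψ₀ y|
            + |∑ β : I, ψ₀ (c β) * (ψ' β (π x * π y) - ψ' β (π x) - ψ' β (π y))| :=
            abs_sub _ _
        _ ≤ D₀ + ∑ β : I, |ψ₀ (c β)| * D' := by
            refine add_le_add (hψ₀qm x y) ?_
            calc |∑ β : I, ψ₀ (c β) * (ψ' β (π x * π y) - ψ' β (π x) - ψ' β (π y))|
                ≤ ∑ β : I, |ψ₀ (c β) * (ψ' β (π x * π y) - ψ' β (π x) - ψ' β (π y))| :=
                  Finset.abs_sum_le_sum_abs _ _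
              _ ≤ ∑ β : I, |ψ₀ (c β)| * D' := by
                  refine Finset.sum_le_sum fun β _ => ?_
                  rw [abs_mul]
                  exact mul_le_mul_of_nonneg_left (hψ'qm β (π x) (π y)) (abs_nonneg _)
    have hinv : ∀ g : G, ψ g⁻¹ = -ψ g := by
      intro g
      have h1 : ψ₀ g⁻¹ = -ψ₀ g := by
        have := hψ₀hom g (-1); simpa using this
      have h2 : ∀ β : I, ψ' β (π g)⁻¹ = -ψ' β (π g) := by
        intro β
        have := hψ'hom β (π g) (-1); simpa using this
      simp only [ψ, map_inv, h1, h2, mul_neg, Finset.sum_neg_distrib]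
      ring
    refine ⟨D, hqm, ?_⟩
    intro α n g x
    have hA := hqm g ((c α) ^ n * (g⁻¹ * x))
    have hB := hqm ((c α) ^ n) (g⁻¹ * x)
    have hC := hqm g⁻¹ x
    have heq : g * (c α) ^ n * g⁻¹ * x = g * ((c α) ^ n * (g⁻¹ * x)) := by group
    rw [heq]
    rw [hvan α n] at hB
    rw [hinv g] at hC
    rw [abs_le] at hA hB hC ⊢
    constructor <;> linarith [hA.1, hA.2, hB.1, hB.2, hC.1, hC.2]
end

section
/- Let X be the blown-up commutation graph over a triangle-free and square-free graph Y, with fibres X_v = {v} ⋆ Λ_v. For a simplex Δ of X with projection \bar{Δ} ⊆ Y, the link of Δ in X decomposes as the simplicial join Lk_X(Δ) = p⁻¹(Lk_Y(\bar{Δ})) ⋆ (⋆_{v ∈ V(\bar{Δ})} Lk_{X_v}(Δ_v)), where Δ_v = Δ ∩ X_v. -/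
/-- Adjacency in the blown-up commutation graph `X` over the graph `Y` (roots
`Sum.inl v` and leaves `Sum.inr ⟨v, l⟩`). -/
def blowupAdj {V : Type*} {Λ : V → Type*} (Y : SimpleGraph V) :
    (V ⊕ (Σ v : V, Λ v)) → (V ⊕ (Σ v : V, Λ v)) → Prop
  | Sum.inl v, Sum.inl w => Y.Adj v w
  | Sum.inl v, Sum.inr q => v = q.1 ∨ Y.Adj v q.1
  | Sum.inr p, Sum.inl w => p.1 = w ∨ Y.Adj p.1 w
  | Sum.inr p, Sum.inr q => Y.Adj p.1 q.1

/-- Join decomposition of links in the blow-up `X` of a triangle-free, square-free graph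
`Y`.  For a simplex (clique) `Δ` of `X` with projection `Δ̄ = p(Δ) ⊆ Y`, the link of
`Δ` decomposes as the join `Lk_X(Δ) = p⁻¹(Lk_Y(Δ̄)) ⋆ (⋆_{v ∈ Δ̄} Lk_{X_v}(Δ_v))` where
`Δ_v = Δ ∩ X_v`: its vertex set is the union of `p⁻¹(Lk_Y(Δ̄))` and the fibrewise links
`Lk_{X_v}(Δ_v)` for `v ∈ Δ̄`, and any two vertices lying in different factors are
adjacent in `X` (which, `X` being flag, expresses the simplicial join). -/
theorem blowup_link_join_decomposition
    {V : Type*} {Λ : V → Type*} [DecidableEq V] [∀ v, DecidableEq (Λ v)]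
    (Y : SimpleGraph V)
    (htri : ∀ a b c : V, Y.Adj a b → Y.Adj b c → Y.Adj a c → False)
    (hsq : ∀ a b c d : V, a ≠ c → b ≠ d →
      Y.Adj a b → Y.Adj b c → Y.Adj c d → Y.Adj d a → False)
    (Δ : Finset (V ⊕ (Σ v : V, Λ v)))
    (hclique : ∀ p ∈ Δ, ∀ q ∈ Δ, p ≠ q → blowupAdj Y p q) :
    -- vertex set of the link is the union of the factors
    (∀ p : V ⊕ (Σ v : V, Λ v),
      (p ∉ Δ ∧ ∀ q ∈ Δ, blowupAdj Y p q) ↔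
        ((Sum.elim id Sigma.fst p ∉ Δ.image (Sum.elim id Sigma.fst) ∧
            ∀ w ∈ Δ.image (Sum.elim id Sigma.fst), Y.Adj (Sum.elim id Sigma.fst p) w) ∨
         (∃ v ∈ Δ.image (Sum.elim id Sigma.fst),
            Sum.elim id Sigma.fst p = v ∧ p ∉ Δ ∧
            ∀ q ∈ Δ, Sum.elim id Sigma.fst q = v → blowupAdj Y p q))) ∧
    -- distinct fibre factors are joined
    (∀ v ∈ Δ.image (Sum.elim id Sigma.fst), ∀ w ∈ Δ.image (Sum.elim id Sigma.fst),
      v ≠ w → ∀ p q : V ⊕ (Σ v : V, Λ v),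
        (Sum.elim id Sigma.fst p = v ∧ p ∉ Δ ∧
          ∀ r ∈ Δ, Sum.elim id Sigma.fst r = v → blowupAdj Y p r) →
        (Sum.elim id Sigma.fst q = w ∧ q ∉ Δ ∧
          ∀ r ∈ Δ, Sum.elim id Sigma.fst r = w → blowupAdj Y q r) →
        blowupAdj Y p q) ∧
    -- each fibre factor is joined to `p⁻¹(Lk_Y(Δ̄))`
    (∀ v ∈ Δ.image (Sum.elim id Sigma.fst), ∀ p q : V ⊕ (Σ v : V, Λ v),
      (Sum.elim id Sigma.fst p = v ∧ p ∉ Δ ∧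
        ∀ r ∈ Δ, Sum.elim id Sigma.fst r = v → blowupAdj Y p r) →
      (Sum.elim id Sigma.fst q ∉ Δ.image (Sum.elim id Sigma.fst) ∧
        ∀ w ∈ Δ.image (Sum.elim id Sigma.fst), Y.Adj (Sum.elim id Sigma.fst q) w) →
      blowupAdj Y p q) := by
  classical
  set π : (V ⊕ (Σ v : V, Λ v)) → V := Sum.elim id Sigma.fst with hπ
  have key : ∀ p q : V ⊕ (Σ v : V, Λ v), Y.Adj (π p) (π q) → blowupAdj Y p q := by
    rintro (a | a) (b | b) h <;> simp [blowupAdj, π] at h ⊢ <;> tauto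
  have proj : ∀ p ∈ Δ, ∀ q ∈ Δ, π p ≠ π q → Y.Adj (π p) (π q) := by
    intro p hp q hq hne
    have hpq : p ≠ q := fun h => hne (by rw [h])
    have h := hclique p hp q hq hpq
    revert h hne
    rcases p with a | a <;> rcases q with b | b <;> simp [blowupAdj, π] <;> tauto
  refine ⟨?_, ?_, ?_⟩
  · intro p
    constructor
    · rintro ⟨hpΔ, hadj⟩
      by_cases hv : π p ∈ Δ.image π
      · exact Or.inr ⟨π p, hv, rfl, hpΔ, fun q hq _ => hadj q hq⟩
      · refine Or.inl ⟨hv, ?_⟩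
        intro w hw
        obtain ⟨q, hq, rfl⟩ := Finset.mem_image.mp hw
        have hne : π p ≠ π q := fun h => hv (h ▸ Finset.mem_image_of_mem π hq)
        have h := hadj q hq
        revert h hne
        rcases p with a | a <;> rcases q with b | b <;> simp [blowupAdj, π] <;> tauto
    · rintro (⟨him, hadj⟩ | ⟨v, hv, hpv, hpΔ, hadj⟩)
      · have hpΔ : p ∉ Δ := fun h => him (Finset.mem_image_of_mem π h)
        exact ⟨hpΔ, fun q hq => key p q (hadj (π q) (Finset.mem_image_of_mem π hq))⟩
      · refine ⟨hpΔ, fun q hq => ?_⟩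
        by_cases h : π q = v
        · exact hadj q hq h
        · apply key
          rw [hpv]
          obtain ⟨r, hr, hrv⟩ := Finset.mem_image.mp hv
          have := proj r hr q hq (by rw [hrv]; exact fun h' => h h'.symm)
          rwa [hrv] at this
  · rintro v hv w hw hvw p q ⟨hpv, -, -⟩ ⟨hqw, -, -⟩
    obtain ⟨r, hr, hrv⟩ := Finset.mem_image.mp hv
    obtain ⟨s, hs, hsw⟩ := Finset.mem_image.mp hw
    apply key
    rw [hpv, hqw, ← hrv, ← hsw]
    exact proj r hr s hs (by rw [hrv, hsw]; exact hvw)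
  · rintro v hv p q ⟨hpv, -, -⟩ ⟨him, hadj⟩
    apply key
    have := hadj v hv
    rw [hpv]
    exact this.symm
end
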